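/- arXiv:1807.05630 — 7 statements merged into one kernel-verified Lean document; each statement's English description precedes it below -/
import Mathlib

section
/- Let P_{XY} be a distribution on finite X × Y and Q_Y a distribution on Y, and let 0 < ε + δ < 1 with δ > 0. For any distribution P'_{XY} with P'_X = P_X and total variation distance T(P'_{XY}, P_{XY}) ≤ ε satisfying P'_{XY} ≤ 2^d · P_X × Q_Y pointwise, it holds that D_s^{ε/(1−δ)}(P_{XY} ‖ P_X × Q_Y) ≤ d + log₂(1/δ). -/
open scoped BigOperators
open Classical Real

noncomputable def Tv {α : Type*} [Fintype α] (P Q : α → ℝ) : ℝ :=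
  (1/2) * ∑ x, |P x - Q x| + (1/2) * |∑ x, P x - ∑ x, Q x|

noncomputable def Dmax {α : Type*} [Fintype α] (P R : α → ℝ) : ℝ :=
  Real.logb 2 (sInf {l : ℝ | ∀ x, P x ≤ l * R x})

noncomputable def Ds {α : Type*} [Fintype α] (ε : ℝ) (P R : α → ℝ) : ℝ :=
  sInf {a : ℝ | (∑ x, if (2:ℝ) ^ a * R x < P x then P x else 0) < ε}

theorem stmt4 {X Y : Type*} [Fintype X] [Fintype Y] (P P' : X × Y → ℝ) (Q : Y → ℝ)
    (ε δ d : ℝ)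
    (hP : ∀ p, 0 ≤ P p) (hP1 : ∑ p, P p = 1)
    (hP' : ∀ p, 0 ≤ P' p) (hP'1 : ∑ p, P' p = 1)
    (hQ : ∀ y, 0 ≤ Q y) (hQ1 : ∑ y, Q y = 1)
    (hδ : 0 < δ) (h1 : ε + δ < 1)
    (hmarg : ∀ x, ∑ y, P' (x, y) = ∑ y, P (x, y))
    (hclose : Tv P' P ≤ ε)
    (hdom : ∀ p, P' p ≤ (2:ℝ) ^ d * ((∑ y, P (p.1, y)) * Q p.2)) :
    Ds (ε / (1 - δ)) P (fun p => (∑ y, P (p.1, y)) * Q p.2)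
      ≤ d + Real.logb 2 (1/δ) := by
  set R : X × Y → ℝ := fun p => (∑ y, P (p.1, y)) * Q p.2 with hR
  have hRnn : ∀ p, 0 ≤ R p := fun p =>
    mul_nonneg (Finset.sum_nonneg fun _ _ => hP _) (hQ _)
  have hεnn : 0 ≤ ε := by
    refine le_trans ?_ hclose
    unfold Tv
    positivity
  have hδ1 : δ < 1 := lt_of_le_of_lt (le_add_of_nonneg_left hεnn) h1
  have h1δ : 0 < 1 - δ := by linarith
  have habs : ∑ p, |P' p - P p| ≤ 2 * ε := by
    have hTv : Tv P' P = (1/2) * ∑ p, |P' p - P p| := by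
      unfold Tv; rw [hP1, hP'1]; simp
    rw [hTv] at hclose; linarith
  have hzero : ∑ p, (P p - P' p) = 0 := by
    rw [Finset.sum_sub_distrib, hP1, hP'1]; ring
  have hsumdiff : ∀ B : Finset (X × Y), ∑ p ∈ B, (P p - P' p) ≤ ε := by
    intro B
    set g : X × Y → ℝ := fun p => (|P' p - P p| + (P p - P' p)) / 2 with hg
    have hgle : ∀ p, P p - P' p ≤ g p := by
      intro p
      have : P p - P' p ≤ |P p - P' p| := le_abs_self _
      rw [abs_sub_comm] at this
      simp only [hg]; linarith
    have hgnn : ∀ p, 0 ≤ g p := by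
      intro p
      have : -(P p - P' p) ≤ |P p - P' p| := neg_le_abs _
      rw [abs_sub_comm] at this
      simp only [hg]; linarith
    calc ∑ p ∈ B, (P p - P' p) ≤ ∑ p ∈ B, g p := Finset.sum_le_sum fun p _ => hgle p
      _ ≤ ∑ p, g p :=
          Finset.sum_le_sum_of_subset_of_nonneg (Finset.subset_univ B)
            (fun p _ _ => hgnn p)
      _ = ((∑ p, |P' p - P p|) + ∑ p, (P p - P' p)) / 2 := by
          simp only [hg]; rw [← Finset.sum_add_distrib, ← Finset.sum_div]
      _ ≤ (2 * ε + 0) / 2 := by rw [hzero]; linarith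
      _ = ε := by ring
  have hpow : (2:ℝ) ^ (d + Real.logb 2 (1/δ)) = 2 ^ d * (1/δ) := by
    rw [Real.rpow_add two_pos, Real.rpow_logb two_pos (by norm_num) (by positivity)]
  rcases eq_or_lt_of_le hεnn with hε0 | hεpos
  · -- ε = 0 : the set is empty, sInf ∅ = 0
    have hRsum : ∑ p, R p = 1 := by
      rw [hR, Fintype.sum_prod_type]
      have hx : ∀ x : X, ∑ y, (∑ y', P (x, y')) * Q y = ∑ y', P (x, y') := by
        intro x; rw [← Finset.mul_sum, hQ1, mul_one]
      rw [Finset.sum_congr rfl fun x _ => hx x, ← Fintype.sum_prod_type, hP1]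
    have hSempty :
        {a : ℝ | (∑ p, if (2:ℝ) ^ a * R p < P p then P p else 0) < ε / (1 - δ)} = ∅ := by
      ext a
      simp only [Set.mem_setOf_eq, Set.mem_empty_iff_false, iff_false, not_lt, ← hε0,
        zero_div]
      refine Finset.sum_nonneg fun p _ => ?_
      split
      exacts [hP p, le_rfl]
    have hd : (1:ℝ) ≤ 2 ^ d := by
      calc (1:ℝ) = ∑ p, P' p := hP'1.symm
        _ ≤ ∑ p, 2 ^ d * R p := Finset.sum_le_sum fun p _ => hdom p
        _ = 2 ^ d * ∑ p, R p := by rw [Finset.mul_sum]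
        _ = 2 ^ d := by rw [hRsum, mul_one]
    have hd0 : 0 ≤ d := by
      by_contra h
      push_neg at h
      have := Real.rpow_lt_one_of_one_lt_of_neg (by norm_num : (1:ℝ) < 2) h
      linarith
    unfold Ds
    rw [hSempty, Real.sInf_empty]
    refine add_nonneg hd0 (Real.logb_nonneg (by norm_num) ?_)
    rw [le_div_iff₀ hδ]; linarith
  · -- ε > 0
    have hmem :
        (∑ p, if (2:ℝ) ^ (d + Real.logb 2 (1/δ)) * R p < P p then P p else 0)
          < ε / (1 - δ) := by
      rw [← Finset.sum_filter]
      set B := Finset.univ.filter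
        (fun p => (2:ℝ) ^ (d + Real.logb 2 (1/δ)) * R p < P p) with hB
      have hkey : ∀ p ∈ B, (1 - δ) * P p < P p - P' p := by
        intro p hp
        rw [hB, Finset.mem_filter] at hp
        have h2 : (2:ℝ) ^ d * R p = δ * ((2:ℝ) ^ (d + Real.logb 2 (1/δ)) * R p) := by
          rw [hpow]; field_simp
        have h3 : P' p < δ * P p := by
          calc P' p ≤ (2:ℝ) ^ d * R p := hdom p
            _ = δ * ((2:ℝ) ^ (d + Real.logb 2 (1/δ)) * R p) := h2
            _ < δ * P p := by exact mul_lt_mul_of_pos_left hp.2 hδ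
        linarith
      rcases B.eq_empty_or_nonempty with hBe | hBne
      · rw [hBe, Finset.sum_empty]
        positivity
      · have hlt : ∑ p ∈ B, (1 - δ) * P p < ∑ p ∈ B, (P p - P' p) :=
          Finset.sum_lt_sum_of_nonempty hBne hkey
        have h4 := hsumdiff B
        have h5 : (1 - δ) * ∑ p ∈ B, P p < ε := by
          rw [Finset.mul_sum]; linarith
        rw [lt_div_iff₀ h1δ]
        nlinarith
    have hne : Nonempty (X × Y) := by
      rcases isEmpty_or_nonempty (X × Y) with h | h
      · rw [Finset.univ_eq_empty, Finset.sum_empty] at hP1; norm_num at hP1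
      · exact h
    set f : X × Y → ℝ := fun p => if 0 < P p ∧ 0 < R p then P p / R p else 1 with hf
    have hfpos : ∀ p, 0 < f p := by
      intro p; simp only [hf]
      split
      · next h => exact div_pos h.1 h.2
      · norm_num
    set c : ℝ := Finset.univ.inf' Finset.univ_nonempty f with hc
    have hcpos : 0 < c := by
      rw [hc, Finset.lt_inf'_iff]
      exact fun p _ => hfpos p
    have hbdd : BddBelow
        {a : ℝ | (∑ p, if (2:ℝ) ^ a * R p < P p then P p else 0) < ε / (1 - δ)} := by
      refine ⟨Real.logb 2 c, fun a ha => ?_⟩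
      simp only [Set.mem_setOf_eq] at ha
      have hlt1 : ε / (1 - δ) < 1 := (div_lt_one h1δ).mpr (by linarith)
      have hex : ∃ p, 0 < P p ∧ P p ≤ (2:ℝ) ^ a * R p := by
        by_contra hcon
        push_neg at hcon
        have hall : (∑ p, if (2:ℝ) ^ a * R p < P p then P p else 0) = 1 := by
          rw [← hP1]
          refine Finset.sum_congr rfl fun p _ => ?_
          rcases (hP p).lt_or_eq with h | h
          · rw [if_pos (hcon p h)]
          · simp [← h]
        linarith
      rcases hex with ⟨p, hp1, hp2⟩
      have hRp : 0 < R p := by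
        by_contra h
        push_neg at h
        have hR0 : R p = 0 := le_antisymm h (hRnn p)
        rw [hR0, mul_zero] at hp2; linarith
      have hfc : c ≤ P p / R p := by
        have h := Finset.inf'_le f (Finset.mem_univ p)
        rw [← hc] at h
        simpa only [hf, if_pos (⟨hp1, hRp⟩ : 0 < P p ∧ 0 < R p)] using h
      have h2a : P p / R p ≤ (2:ℝ) ^ a := (div_le_iff₀ hRp).mpr (by linarith [mul_comm ((2:ℝ) ^ a) (R p)])
      have hca : c ≤ (2:ℝ) ^ a := le_trans hfc h2a
      calc Real.logb 2 c ≤ Real.logb 2 ((2:ℝ) ^ a) :=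
            Real.logb_le_logb_of_le (by norm_num) hcpos hca
        _ = a := Real.logb_rpow two_pos (by norm_num)
    exact csInf_le hbdd hmem
end

section
/- Let P_{XY} be a distribution on finite X × Y with marginal P_Y, and let 0 < ε + δ < 1 with δ > 0. Suppose P'_{XY} is a sub-normalized distribution with T(P_{XY}, P'_{XY}) ≤ ε (generalized trace distance), P'_Y ≤ P_Y pointwise, and P'_{XY}(x,y) ≤ 2^{−d} P_Y(y) for all (x,y). Then the set A := {(x,y) : P_{XY}(x,y) ≥ (1/δ)·P'_{XY}(x,y)} satisfies P_{XY}(A) ≤ ε/(1−δ), and for all (x,y) ∉ A we have P_{XY}(x,y) ≤ (2^{−d}/δ)·P_Y(y). -/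
open scoped BigOperators
open Classical Real

theorem stmt5 {X Y : Type*} [Fintype X] [Fintype Y] (P P' : X × Y → ℝ)
    (ε δ d : ℝ)
    (hP : ∀ p, 0 ≤ P p) (hP1 : ∑ p, P p = 1)
    (hP' : ∀ p, 0 ≤ P' p) (hP'1 : ∑ p, P' p ≤ 1)
    (hδ : 0 < δ) (h1 : ε + δ < 1)
    (hclose : Tv P P' ≤ ε)
    (hmarg : ∀ y, ∑ x, P' (x, y) ≤ ∑ x, P (x, y))
    (hdom : ∀ p : X × Y, P' p ≤ (2:ℝ) ^ (-d) * (∑ x, P (x, p.2))) :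
    (∑ p : X × Y, if (1/δ) * P' p ≤ P p then P p else 0) ≤ ε / (1 - δ) ∧
    (∀ p : X × Y, ¬ ((1/δ) * P' p ≤ P p) →
      P p ≤ ((2:ℝ) ^ (-d) / δ) * (∑ x, P (x, p.2))) := by
  have hTv0 : 0 ≤ Tv P P' := by
    unfold Tv
    have h1 : 0 ≤ ∑ x, |P x - P' x| := Finset.sum_nonneg fun x _ => abs_nonneg _
    have h2 : 0 ≤ |∑ x, P x - ∑ x, P' x| := abs_nonneg _
    linarith
  have hε0 : 0 ≤ ε := le_trans hTv0 hclose
  have hδ1 : δ < 1 := by linarith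
  constructor
  · -- key: sum of positive parts equals Tv
    have hs : ∑ p, P' p ≤ ∑ p : X × Y, P p := by rw [hP1]; exact hP'1
    have hmax : ∑ p : X × Y, max (P p - P' p) 0 = Tv P P' := by
      unfold Tv
      have e : ∀ a : ℝ, max a 0 = (a + |a|) / 2 := by
        intro a
        rcases le_total a 0 with h | h
        · rw [max_eq_right h, abs_of_nonpos h]; ring
        · rw [max_eq_left h, abs_of_nonneg h]; ring
      rw [abs_of_nonneg (by linarith : (0:ℝ) ≤ ∑ p : X × Y, P p - ∑ p, P' p)]
      rw [Finset.sum_congr rfl fun p _ => e (P p - P' p)]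
      rw [← Finset.sum_div, Finset.sum_add_distrib, Finset.sum_sub_distrib]
      ring
    have hkey : ∑ p : X × Y, max (P p - P' p) 0 ≤ ε := by rw [hmax]; exact hclose
    have hterm : (1 - δ) * (∑ p : X × Y, if (1/δ) * P' p ≤ P p then P p else 0)
        ≤ ∑ p : X × Y, max (P p - P' p) 0 := by
      rw [Finset.mul_sum]
      apply Finset.sum_le_sum
      intro p _
      by_cases hc : (1/δ) * P' p ≤ P p
      · simp only [hc, if_true]
        have hP'le : P' p ≤ δ * P p := by
          have := mul_le_mul_of_nonneg_left hc (le_of_lt hδ)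
          have hδne : δ ≠ 0 := ne_of_gt hδ
          field_simp at this
          linarith
        have : (1 - δ) * P p ≤ P p - P' p := by nlinarith [hP p]
        exact le_trans this (le_max_left _ _)
      · simp only [hc, if_false, mul_zero]
        exact le_max_right _ _
    rw [le_div_iff₀ (by linarith : (0:ℝ) < 1 - δ)]
    calc (∑ p : X × Y, if (1/δ) * P' p ≤ P p then P p else 0) * (1 - δ)
        = (1 - δ) * (∑ p : X × Y, if (1/δ) * P' p ≤ P p then P p else 0) := by ring
      _ ≤ ∑ p : X × Y, max (P p - P' p) 0 := hterm
      _ ≤ ε := hkey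
  · intro p hp
    calc P p ≤ (1/δ) * P' p := le_of_lt (not_le.mp hp)
      _ ≤ (1/δ) * ((2:ℝ) ^ (-d) * (∑ x, P (x, p.2))) := by
          apply mul_le_mul_of_nonneg_left (hdom p)
          positivity
      _ = ((2:ℝ) ^ (-d) / δ) * (∑ x, P (x, p.2)) := by ring
end

section
/- Let P_{XY} be a distribution on finite X × Y, Q_Y a distribution on Y, ε ∈ (0,1), and c := D_s^ε(P_{XY}‖P_X × Q_Y). For each x with P_X(x) > 0, let Good_x := {y : P_{Y|X=x}(y) ≤ 2^c Q_Y(y)} and ε_x := Pr_{y←P_{Y|X=x}}[y ∉ Good_x]. Define P'_{XY}(x,y) := P_X(x)·(P_{Y|X=x}(y)·1[y ∈ Good_x] + ε_x Q_Y(y)). Then P'_{XY} is a probability distribution with marginal P'_X = P_X, T(P_{XY}, P'_{XY}) ≤ ε, and P'_{XY} ≤ (2^c + 1)·P_X × Q_Y pointwise. -/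
open scoped BigOperators
open Classical Real

/-!
Split `P` into its part below the threshold `2^c · P_X × Q_Y` and the excess above it. `P'` keeps
the first part and re-spreads, in each row `x`, the excess mass `P_X(x) ε_x` according to `Q_Y`.
Row sums are therefore unchanged, `P` and `P'` differ by at most the excess twice over (once
removed, once added back), and the total excess is at most `ε` by the choice of `c`. The re-spread
mass in row `x` is at most `P_X(x) Q_Y(y)` at `y`, which gives the extra `+ 1` in the bound.
-/

open Finset

section Redistribute

variable {X Y : Type*}

noncomputable def excess (P T : X × Y → ℝ) (p : X × Y) : ℝ :=
  if T p < P p then P p else 0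

lemma excess_nonneg {P : X × Y → ℝ} (hP : ∀ p, 0 ≤ P p) (T : X × Y → ℝ) (p : X × Y) :
    0 ≤ excess P T p := by
  unfold excess; split_ifs <;> simp [hP p]

lemma excess_le {P : X × Y → ℝ} (hP : ∀ p, 0 ≤ P p) (T : X × Y → ℝ) (p : X × Y) :
    excess P T p ≤ P p := by
  unfold excess; split_ifs <;> simp [hP p]

lemma ite_le_eq_sub_excess (P T : X × Y → ℝ) (p : X × Y) :
    (if P p ≤ T p then P p else 0) = P p - excess P T p := by
  unfold excess; split_ifs <;> linarith

lemma sub_excess_le {P T : X × Y → ℝ} {p : X × Y} (hT : 0 ≤ T p) : P p - excess P T p ≤ T p := by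
  rw [← ite_le_eq_sub_excess]; split_ifs with h <;> assumption

variable [Fintype Y]

noncomputable def redistribute (P B : X × Y → ℝ) (Q : Y → ℝ) (p : X × Y) : ℝ :=
  P p - B p + (∑ y, B (p.1, y)) * Q p.2

variable {P B : X × Y → ℝ} {Q : Y → ℝ}

lemma redistribute_nonneg (hBP : ∀ p, B p ≤ P p) (hB : ∀ p, 0 ≤ B p) (hQ : ∀ y, 0 ≤ Q y)
    (p : X × Y) : 0 ≤ redistribute P B Q p := by
  unfold redistribute
  have := hBP p
  have : 0 ≤ (∑ y, B (p.1, y)) * Q p.2 := mul_nonneg (sum_nonneg fun y _ => hB _) (hQ _)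
  linarith

lemma sum_redistribute_row (hQ1 : ∑ y, Q y = 1) (x : X) :
    ∑ y, redistribute P B Q (x, y) = ∑ y, P (x, y) := by
  simp only [redistribute, sum_add_distrib, sum_sub_distrib, ← mul_sum, hQ1, mul_one,
    sub_add_cancel]

lemma sum_redistribute [Fintype X] (hQ1 : ∑ y, Q y = 1) :
    ∑ p, redistribute P B Q p = ∑ p, P p := by
  simp only [Fintype.sum_prod_type, sum_redistribute_row hQ1]

lemma Tv_redistribute_le [Fintype X] (hB : ∀ p, 0 ≤ B p) (hQ : ∀ y, 0 ≤ Q y)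
    (hQ1 : ∑ y, Q y = 1) :
    Tv P (redistribute P B Q) ≤ ∑ p, B p := by
  have hmoved (p : X × Y) : |P p - redistribute P B Q p| ≤ B p + (∑ y, B (p.1, y)) * Q p.2 := by
    have : 0 ≤ (∑ y, B (p.1, y)) * Q p.2 := mul_nonneg (sum_nonneg fun y _ => hB _) (hQ _)
    rw [abs_le]; unfold redistribute; constructor <;> linarith [hB p]
  have hrespread : ∑ p : X × Y, (∑ y, B (p.1, y)) * Q p.2 = ∑ p, B p := by
    simp only [Fintype.sum_prod_type, ← mul_sum, hQ1, mul_one]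
  calc Tv P (redistribute P B Q)
      = 1 / 2 * ∑ p, |P p - redistribute P B Q p| := by
        simp [Tv, sum_redistribute hQ1]
    _ ≤ 1 / 2 * ∑ p, (B p + (∑ y, B (p.1, y)) * Q p.2) := by
        gcongr with p; exact hmoved p
    _ = ∑ p, B p := by rw [sum_add_distrib, hrespread]; ring

lemma redistribute_le {T : ℝ} {p : X × Y} (hPB : P p - B p ≤ T)
    (hBP : ∀ y, B (p.1, y) ≤ P (p.1, y)) (hQ : 0 ≤ Q p.2) :
    redistribute P B Q p ≤ T + (∑ y, P (p.1, y)) * Q p.2 := by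
  unfold redistribute
  gcongr with y
  exact hBP y

end Redistribute

/-- At `m = 0` the hypotheses force `s = 0`, so the junk value `1 / 0 = 0` is harmless. -/
lemma mul_one_div_mul_of_le {m s : ℝ} (hs : 0 ≤ s) (hsm : s ≤ m) : m * (1 / m * s) = s := by
  rcases (hs.trans hsm).eq_or_lt with hm | hm
  · subst hm; linarith [le_antisymm hsm hs]
  · field_simp

theorem stmt6_general {X Y : Type*} [Fintype X] [Fintype Y] (P : X × Y → ℝ) (Q : Y → ℝ)
    (ε c : ℝ)
    (hP : ∀ p, 0 ≤ P p) (hP1 : ∑ p, P p = 1)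
    (hQ : ∀ y, 0 ≤ Q y) (hQ1 : ∑ y, Q y = 1)
    (PX : X → ℝ) (hPX : ∀ x, PX x = ∑ y, P (x, y))
    -- total tail mass at most ε (definition of c = D_s^ε)
    (htail : (∑ p : X × Y, if (2:ℝ) ^ c * (PX p.1 * Q p.2) < P p then P p else 0) ≤ ε)
    (εx : X → ℝ)
    (hεx : ∀ x, εx x = (1 / PX x) *
      ∑ y, if (2:ℝ) ^ c * (PX x * Q y) < P (x, y) then P (x, y) else 0)
    (P' : X × Y → ℝ)
    (hP'def : ∀ p : X × Y,
      P' p = (if P p ≤ (2:ℝ) ^ c * (PX p.1 * Q p.2) then P p else 0) + PX p.1 * εx p.1 * Q p.2) :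
    (∀ p, 0 ≤ P' p) ∧ (∑ p, P' p = 1) ∧
    (∀ x, ∑ y, P' (x, y) = PX x) ∧
    Tv P P' ≤ ε ∧
    (∀ p : X × Y, P' p ≤ ((2:ℝ) ^ c + 1) * (PX p.1 * Q p.2)) := by
  set T : X × Y → ℝ := fun p => (2:ℝ) ^ c * (PX p.1 * Q p.2)
  have hPX0 (x : X) : 0 ≤ PX x := hPX x ▸ sum_nonneg fun y _ => hP _
  have hT0 (p : X × Y) : 0 ≤ T p := by have := hPX0 p.1; have := hQ p.2; positivity
  have hrow (x : X) : ∑ y, excess P T (x, y) = PX x * εx x :=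
    (hεx x ▸ mul_one_div_mul_of_le (sum_nonneg fun y _ => excess_nonneg hP T _)
      (hPX x ▸ sum_le_sum fun y _ => excess_le hP T _)).symm
  have hP' : P' = redistribute P (excess P T) Q := by
    funext p
    rw [hP'def, redistribute, hrow, ite_le_eq_sub_excess P T]
  subst hP'
  refine ⟨redistribute_nonneg (excess_le hP T) (excess_nonneg hP T) hQ, hP1 ▸ sum_redistribute hQ1,
    fun x => (hPX x).symm ▸ sum_redistribute_row hQ1 x,
    (Tv_redistribute_le (excess_nonneg hP T) hQ hQ1).trans htail, fun p => ?_⟩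
  calc redistribute P (excess P T) Q p ≤ T p + PX p.1 * Q p.2 := hPX p.1 ▸
        redistribute_le (sub_excess_le (hT0 p)) (fun y => excess_le hP T _) (hQ p.2)
    _ = ((2:ℝ) ^ c + 1) * (PX p.1 * Q p.2) := by ring

theorem stmt6 {X Y : Type*} [Fintype X] [Fintype Y] (P : X × Y → ℝ) (Q : Y → ℝ)
    (ε c : ℝ)
    (hP : ∀ p, 0 ≤ P p) (hP1 : ∑ p, P p = 1)
    (hQ : ∀ y, 0 ≤ Q y) (hQ1 : ∑ y, Q y = 1)
    (hε : 0 < ε) (hε1 : ε < 1)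
    (PX : X → ℝ) (hPX : ∀ x, PX x = ∑ y, P (x, y))
    -- total tail mass at most ε (definition of c = D_s^ε)
    (htail : (∑ p : X × Y, if (2:ℝ) ^ c * (PX p.1 * Q p.2) < P p then P p else 0) ≤ ε)
    (εx : X → ℝ)
    (hεx : ∀ x, εx x = (1 / PX x) *
      ∑ y, if (2:ℝ) ^ c * (PX x * Q y) < P (x, y) then P (x, y) else 0)
    (P' : X × Y → ℝ)
    (hP'def : ∀ p : X × Y,
      P' p = (if P p ≤ (2:ℝ) ^ c * (PX p.1 * Q p.2) then P p else 0) + PX p.1 * εx p.1 * Q p.2) :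
    (∀ p, 0 ≤ P' p) ∧ (∑ p, P' p = 1) ∧
    (∀ x, ∑ y, P' (x, y) = PX x) ∧
    Tv P P' ≤ ε ∧
    (∀ p : X × Y, P' p ≤ ((2:ℝ) ^ c + 1) * (PX p.1 * Q p.2)) :=
  stmt6_general P Q ε c hP hP1 hQ hQ1 PX hPX htail εx hεx P' hP'def
end

section
/- Classical data-processing for partially smoothed min-entropy under functions: let P_{XY} be a distribution on finite X × Y, f : X → Z a function, and Q_{ZY}(z,y) := ∑_{x : f(x)=z} P_{XY}(x,y). Then H_min^{ε,T}(Z|Ẏ)_Q ≤ H_min^{ε,T}(X|Ẏ)_P, where H_min^{ε,T}(X|Ẏ)_P := sup over sub-normalized P'_{XY} with T(P'_{XY},P_{XY}) ≤ ε and P'_Y ≤ P_Y of −D_max(P'_{XY} ‖ 1_X × P_Y). -/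
open scoped BigOperators
open Classical Real

noncomputable def Hmin {A Y : Type*} [Fintype A] [Fintype Y] (ε : ℝ) (P : A × Y → ℝ) : ℝ :=
  sSup {h : ℝ | ∃ P' : A × Y → ℝ, (∀ p, 0 ≤ P' p) ∧ (∑ p, P' p ≤ 1) ∧
    Tv P' P ≤ ε ∧ (∀ y, ∑ a, P' (a, y) ≤ ∑ a, P (a, y)) ∧
    h = - Dmax P' (fun p => ∑ a, P (a, p.2))}

open Finset

/-!
Given a smoothing `Q'` of the pushforward `Q = f_* P`, spread each value `Q'(z, y)` over the
fibre `f⁻¹(z)` in proportion to `P`. Since this lift `P'` has constant ratio to `P` on each fibre,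
its distance to `P` is that of `Q'` (restricted to the support of `Q`) to `Q`, and its marginal
on `Y` is at most that of `Q'`; moreover `P' ≤ Q' ∘ f` pointwise while `P_Y = Q_Y`, so
`D_max(P' ‖ 1_X × P_Y) ≤ D_max(Q' ‖ 1_Z × Q_Y)`. For `ε < 1` a smoothing keeps mass `≥ 1 - ε`,
which bounds the supremum defining `Hmin ε P`. For `ε ≥ 1` both suprema are over unbounded sets
(smoothings `2⁻ᵗ P` for all `t`), so both sides are `0` by the `sSup` convention.
-/

lemma mul_div_le_of_nonneg (a : ℝ) {b : ℝ} (hb : 0 ≤ b) : a * (b / a) ≤ b := by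
  rcases eq_or_ne a 0 with h | h
  · simp [h, hb]
  · rw [mul_div_cancel₀ _ h]

section Tv

variable {α : Type*} [Fintype α]

lemma Tv_self (P : α → ℝ) : Tv P P = 0 := by
  simp [Tv]

lemma abs_sum_sub_sum_le_Tv (P Q : α → ℝ) : |∑ x, P x - ∑ x, Q x| ≤ Tv P Q := by
  have h : |∑ x, P x - ∑ x, Q x| ≤ ∑ x, |P x - Q x| := by
    rw [← sum_sub_distrib]
    exact abs_sum_le_sum_abs _ _
  rw [Tv]
  linarith

lemma Tv_mul_self {P : α → ℝ} (hP : ∀ x, 0 ≤ P x) {δ : ℝ} (hδ : δ ≤ 1) :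
    Tv (fun x => δ * P x) P = (1 - δ) * ∑ x, P x := by
  have hterm : ∀ x, |δ * P x - P x| = (1 - δ) * P x := fun x => by
    rw [abs_of_nonpos (by nlinarith [hP x])]
    ring
  have hsum : |∑ x, δ * P x - ∑ x, P x| = (1 - δ) * ∑ x, P x := by
    rw [← mul_sum, abs_of_nonpos (by nlinarith [sum_nonneg fun x (_ : x ∈ univ) => hP x])]
    ring
  rw [Tv, hsum, sum_congr rfl fun x _ => hterm x, ← mul_sum]
  ring

/-- `fun x => Q x * (Q' x / Q x)` is `Q'` set to `0` off the support of `Q` (as `x / 0 = 0`). -/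
lemma Tv_mul_div_le {Q Q' : α → ℝ} (hQ' : ∀ x, 0 ≤ Q' x) :
    Tv (fun x => Q x * (Q' x / Q x)) Q ≤ Tv Q' Q := by
  set R : α → ℝ := fun x => Q x * (Q' x / Q x)
  have hpoint : ∀ x, |R x - Q x| + (Q' x - R x) = |Q' x - Q x| ∧ 0 ≤ Q' x - R x := fun x => by
    rcases eq_or_ne (Q x) 0 with h | h
    · simp [R, h, abs_of_nonneg (hQ' x), hQ' x]
    · simp [R, mul_div_cancel₀ _ h]
  set m := ∑ x, (Q' x - R x)
  have hm : 0 ≤ m := sum_nonneg fun x _ => (hpoint x).2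
  have habs : ∑ x, |R x - Q x| = ∑ x, |Q' x - Q x| - m := by
    have h := sum_congr rfl fun x (_ : x ∈ univ) => (hpoint x).1
    rw [sum_add_distrib] at h
    linarith
  have hmass : ∑ x, R x = ∑ x, Q' x - m := by
    simp only [m, sum_sub_distrib]
    ring
  have hshift : |∑ x, Q' x - m - ∑ x, Q x| ≤ |∑ x, Q' x - ∑ x, Q x| + m := by
    rw [sub_right_comm]
    exact (abs_sub _ _).trans_eq (by rw [abs_of_nonneg hm])
  rw [Tv, Tv, habs, hmass]
  linarith

end Tv

section Dmax

variable {α β : Type*}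

lemma le_of_forall_le_mul {P R : α → ℝ} (hR0 : ∀ x, 0 ≤ R x) (hR1 : ∀ x, R x ≤ 1)
    {x₀ : α} (hx₀ : 0 < P x₀) {l : ℝ} (hl : ∀ x, P x ≤ l * R x) : P x₀ ≤ l := by
  have := hl x₀
  rcases le_or_gt l 0 with hl0 | hl0
  · nlinarith [hR0 x₀]
  · nlinarith [hR1 x₀]

lemma le_sInf_of_forall_le_mul {P R : α → ℝ} (hR0 : ∀ x, 0 ≤ R x) (hR1 : ∀ x, R x ≤ 1)
    {x₀ : α} (hx₀ : 0 < P x₀) (hne : ∃ l, ∀ x, P x ≤ l * R x) :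
    P x₀ ≤ sInf {l | ∀ x, P x ≤ l * R x} :=
  le_csInf hne fun _ => le_of_forall_le_mul hR0 hR1 hx₀

variable [Fintype α] [Fintype β]

lemma logb_le_Dmax {P R : α → ℝ} (hR0 : ∀ x, 0 ≤ R x) (hR1 : ∀ x, R x ≤ 1)
    {x₀ : α} (hx₀ : 0 < P x₀) (hne : ∃ l, ∀ x, P x ≤ l * R x) :
    logb 2 (P x₀) ≤ Dmax P R :=
  logb_le_logb_of_le one_lt_two hx₀ (le_sInf_of_forall_le_mul hR0 hR1 hx₀ hne)

lemma Dmax_le_logb {P R : α → ℝ} (hR0 : ∀ x, 0 ≤ R x) (hR1 : ∀ x, R x ≤ 1)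
    {x₀ : α} (hx₀ : 0 < P x₀) {l : ℝ} (hl : ∀ x, P x ≤ l * R x) :
    Dmax P R ≤ logb 2 l :=
  logb_le_logb_of_le one_lt_two (hx₀.trans_le (le_sInf_of_forall_le_mul hR0 hR1 hx₀ ⟨l, hl⟩))
    (csInf_le ⟨P x₀, fun _ => le_of_forall_le_mul hR0 hR1 hx₀⟩ hl)

lemma Dmax_le_Dmax_of_subset {P R : α → ℝ} {Q S : β → ℝ} (hR0 : ∀ x, 0 ≤ R x)
    (hR1 : ∀ x, R x ≤ 1) {x₀ : α} (hx₀ : 0 < P x₀) (hne : ∃ l, ∀ y, Q y ≤ l * S y)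
    (hsub : {l | ∀ y, Q y ≤ l * S y} ⊆ {l | ∀ x, P x ≤ l * R x}) :
    Dmax P R ≤ Dmax Q S :=
  logb_le_logb_of_le one_lt_two
    (hx₀.trans_le (le_sInf_of_forall_le_mul hR0 hR1 hx₀ (hne.imp fun _ hl => hsub hl)))
    (csInf_le_csInf ⟨P x₀, fun _ => le_of_forall_le_mul hR0 hR1 hx₀⟩ hne hsub)

end Dmax

section Marginal

variable {A Y : Type*} [Fintype A] {P : A × Y → ℝ}

lemma marginal_nonneg (hP : ∀ p, 0 ≤ P p) (y : Y) : 0 ≤ ∑ a, P (a, y) :=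
  sum_nonneg fun a _ => hP (a, y)

lemma apply_le_marginal (hP : ∀ p, 0 ≤ P p) (p : A × Y) : P p ≤ ∑ a, P (a, p.2) :=
  single_le_sum (f := fun a => P (a, p.2)) (fun _ _ => hP _) (mem_univ p.1)

lemma marginal_le_one [Fintype Y] (hP : ∀ p, 0 ≤ P p) (hP1 : ∑ p, P p = 1) (y : Y) :
    ∑ a, P (a, y) ≤ 1 := by
  rw [← hP1, Fintype.sum_prod_type_right]
  exact single_le_sum (f := fun y => ∑ a, P (a, y)) (fun y _ => marginal_nonneg hP y) (mem_univ y)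

end Marginal

section Smoothing

variable {A Y : Type*} [Fintype A] [Fintype Y]

structure IsSmoothing (ε : ℝ) (P P' : A × Y → ℝ) : Prop where
  nonneg : ∀ p, 0 ≤ P' p
  sum_le_one : ∑ p, P' p ≤ 1
  Tv_le : Tv P' P ≤ ε
  marginal_le : ∀ y, ∑ a, P' (a, y) ≤ ∑ a, P (a, y)

def smoothedEntropies (ε : ℝ) (P : A × Y → ℝ) : Set ℝ :=
  (fun P' => -Dmax P' fun p => ∑ a, P (a, p.2)) '' {P' | IsSmoothing ε P P'}

lemma Hmin_eq_sSup_smoothedEntropies (ε : ℝ) (P : A × Y → ℝ) :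
    Hmin ε P = sSup (smoothedEntropies ε P) := by
  rw [Hmin, smoothedEntropies]
  congr 1
  ext h
  constructor
  · rintro ⟨P', h0, h1, h2, h3, rfl⟩
    exact ⟨P', ⟨h0, h1, h2, h3⟩, rfl⟩
  · rintro ⟨P', ⟨h0, h1, h2, h3⟩, rfl⟩
    exact ⟨P', h0, h1, h2, h3, rfl⟩

variable {ε : ℝ} {P P' : A × Y → ℝ}

lemma IsSmoothing.self (hε : 0 ≤ ε) (hP : ∀ p, 0 ≤ P p) (hP1 : ∑ p, P p ≤ 1) :
    IsSmoothing ε P P :=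
  ⟨hP, hP1, (Tv_self P).trans_le hε, fun _ => le_rfl⟩

lemma IsSmoothing.le_marginal (hs : IsSmoothing ε P P') (p : A × Y) :
    P' p ≤ ∑ a, P (a, p.2) :=
  (apply_le_marginal hs.nonneg p).trans (hs.marginal_le p.2)

lemma IsSmoothing.exists_forall_le_mul (hs : IsSmoothing ε P P') :
    ∃ l, ∀ p, P' p ≤ l * ∑ a, P (a, p.2) :=
  ⟨1, fun p => by simpa using hs.le_marginal p⟩

lemma IsSmoothing.one_sub_le_sum (hs : IsSmoothing ε P P') (hP1 : ∑ p, P p = 1) :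
    1 - ε ≤ ∑ p, P' p := by
  have := abs_sum_sub_sum_le_Tv P' P
  rw [hP1] at this
  linarith [neg_abs_le (∑ p, P' p - 1), hs.Tv_le]

lemma exists_pos_forall_isSmoothing_exists_le (hε : ε < 1) (hP1 : ∑ p, P p = 1) :
    ∃ c > 0, ∀ P', IsSmoothing ε P P' → ∃ p, c ≤ P' p := by
  have hne : (univ : Finset (A × Y)).Nonempty := nonempty_of_sum_ne_zero (by rw [hP1]; norm_num)
  have hcard : (0 : ℝ) < #(univ : Finset (A × Y)) := by exact_mod_cast hne.card_pos
  refine ⟨(1 - ε) / #(univ : Finset (A × Y)), div_pos (by linarith) hcard, fun P' hs => ?_⟩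
  obtain ⟨p, -, hp⟩ := exists_le_of_sum_le hne
    (f := fun _ => (1 - ε) / #(univ : Finset (A × Y))) (g := P') (by
    rw [sum_const, nsmul_eq_mul, mul_div_cancel₀ _ hcard.ne']
    exact hs.one_sub_le_sum hP1)
  exact ⟨p, hp⟩

lemma bddAbove_smoothedEntropies (hε : ε < 1) (hP : ∀ p, 0 ≤ P p) (hP1 : ∑ p, P p = 1) :
    BddAbove (smoothedEntropies ε P) := by
  obtain ⟨c, hc, hmax⟩ := exists_pos_forall_isSmoothing_exists_le hε hP1
  refine ⟨-logb 2 c, ?_⟩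
  rintro _ ⟨P', hs, rfl⟩
  obtain ⟨p, hp⟩ := hmax P' hs
  have h1 := logb_le_Dmax (fun p => marginal_nonneg hP p.2) (fun p => marginal_le_one hP hP1 p.2)
    (hc.trans_le hp) hs.exists_forall_le_mul
  have h2 := logb_le_logb_of_le one_lt_two hc hp
  simp only
  linarith

lemma not_bddAbove_smoothedEntropies (hε : 1 ≤ ε) (hP : ∀ p, 0 ≤ P p) (hP1 : ∑ p, P p = 1) :
    ¬ BddAbove (smoothedEntropies ε P) := by
  obtain ⟨p₀, hp₀⟩ : ∃ p, 0 < P p := by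
    by_contra! h
    linarith [sum_nonpos fun p (_ : p ∈ univ) => h p]
  rw [not_bddAbove_iff]
  intro M
  set t := max M 0 + 1
  set δ := (2 : ℝ) ^ (-t)
  have hδ0 : 0 < δ := by positivity
  have hδ1 : δ ≤ 1 := rpow_le_one_of_one_le_of_nonpos one_le_two (by linarith [le_max_right M 0])
  have hs : IsSmoothing ε P (fun p => δ * P p) := by
    refine ⟨fun p => mul_nonneg hδ0.le (hP p), ?_, ?_, fun y => ?_⟩
    · rw [← mul_sum, hP1]
      linarith
    · rw [Tv_mul_self hP hδ1, hP1]
      linarith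
    · rw [← mul_sum]
      exact mul_le_of_le_one_left (marginal_nonneg hP y) hδ1
  refine ⟨_, ⟨_, hs, rfl⟩, ?_⟩
  have := Dmax_le_logb (fun p => marginal_nonneg hP p.2) (fun p => marginal_le_one hP hP1 p.2)
    (x₀ := p₀) (by positivity) (l := δ)
    (fun p => mul_le_mul_of_nonneg_left (apply_le_marginal hP p) hδ0.le)
  rw [logb_rpow two_pos (by norm_num)] at this
  linarith [le_max_left M 0]

lemma Hmin_of_one_le (hε : 1 ≤ ε) (hP : ∀ p, 0 ≤ P p) (hP1 : ∑ p, P p = 1) : Hmin ε P = 0 := by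
  rw [Hmin_eq_sSup_smoothedEntropies,
    sSup_of_not_bddAbove (not_bddAbove_smoothedEntropies hε hP hP1)]

end Smoothing

section Pushforward

variable {X Y Z : Type*} [Fintype X] (f : X → Z)

noncomputable def pushFst (F : X × Y → ℝ) : Z × Y → ℝ :=
  fun q => ∑ x, if f x = q.1 then F (x, q.2) else 0

lemma sum_pushFst_fst [Fintype Z] (F : X × Y → ℝ) (y : Y) :
    ∑ z, pushFst f F (z, y) = ∑ x, F (x, y) := by
  simp only [pushFst]
  rw [sum_comm]
  simp

lemma sum_pushFst [Fintype Y] [Fintype Z] (F : X × Y → ℝ) :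
    ∑ q, pushFst f F q = ∑ p, F p := by
  simp only [Fintype.sum_prod_type_right, sum_pushFst_fst]

lemma pushFst_nonneg {F : X × Y → ℝ} (hF : ∀ p, 0 ≤ F p) (q : Z × Y) : 0 ≤ pushFst f F q :=
  sum_nonneg fun x _ => by split_ifs <;> simp [hF]

lemma apply_le_pushFst {F : X × Y → ℝ} (hF : ∀ p, 0 ≤ F p) (p : X × Y) :
    F p ≤ pushFst f F (f p.1, p.2) := by
  have := single_le_sum (f := fun x => if f x = f p.1 then F (x, p.2) else 0)
    (fun x _ => by split_ifs <;> simp [hF]) (mem_univ p.1)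
  simpa [pushFst] using this

lemma pushFst_mul_comp (F : X × Y → ℝ) (g : Z × Y → ℝ) :
    pushFst f (fun p => F p * g (f p.1, p.2)) = fun q => pushFst f F q * g q := by
  ext ⟨z, y⟩
  simp only [pushFst, sum_mul]
  refine sum_congr rfl fun x _ => ?_
  split_ifs with h
  · rw [h]
  · rw [zero_mul]

noncomputable def liftFst (P : X × Y → ℝ) (Q' : Z × Y → ℝ) : X × Y → ℝ :=
  fun p => P p * (Q' (f p.1, p.2) / pushFst f P (f p.1, p.2))

lemma pushFst_liftFst (P : X × Y → ℝ) (Q' : Z × Y → ℝ) :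
    pushFst f (liftFst f P Q') = fun q => pushFst f P q * (Q' q / pushFst f P q) :=
  pushFst_mul_comp f P fun q => Q' q / pushFst f P q

lemma liftFst_le {P : X × Y → ℝ} {Q' : Z × Y → ℝ} (hP : ∀ p, 0 ≤ P p) (hQ' : ∀ q, 0 ≤ Q' q)
    (p : X × Y) :
    liftFst f P Q' p ≤ Q' (f p.1, p.2) :=
  (mul_le_mul_of_nonneg_right (apply_le_pushFst f hP p)
    (div_nonneg (hQ' _) (pushFst_nonneg f hP _))).trans (mul_div_le_of_nonneg _ (hQ' _))

end Pushforward

section Lift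

variable {X Y Z : Type*} [Fintype X] [Fintype Y] [Fintype Z] (f : X → Z) {ε : ℝ}
  {P : X × Y → ℝ} {Q' : Z × Y → ℝ}

lemma Tv_liftFst (hP : ∀ p, 0 ≤ P p) :
    Tv (liftFst f P Q') P =
      Tv (fun q => pushFst f P q * (Q' q / pushFst f P q)) (pushFst f P) := by
  have habs_mul : ∀ {a : ℝ} (b : ℝ), 0 ≤ a → |a * b - a| = a * |b - 1| := fun b ha => by
    rw [← mul_sub_one, abs_mul, abs_of_nonneg ha]
  have habs : ∑ p, |liftFst f P Q' p - P p| =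
      ∑ q, |pushFst f P q * (Q' q / pushFst f P q) - pushFst f P q| := by
    simp only [liftFst, habs_mul _ (hP _)]
    rw [← sum_pushFst f, pushFst_mul_comp f P fun q => |Q' q / pushFst f P q - 1|]
    exact sum_congr rfl fun q _ => (habs_mul _ (pushFst_nonneg f hP q)).symm
  rw [Tv, Tv, habs, ← sum_pushFst f (liftFst f P Q'), pushFst_liftFst, ← sum_pushFst f P]

lemma IsSmoothing.liftFst (hP : ∀ p, 0 ≤ P p) (hs : IsSmoothing ε (pushFst f P) Q') :
    IsSmoothing ε P (liftFst f P Q') where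
  nonneg p := mul_nonneg (hP p) (div_nonneg (hs.nonneg _) (pushFst_nonneg f hP _))
  sum_le_one := by
    rw [← sum_pushFst f, pushFst_liftFst]
    exact (sum_le_sum fun q _ => mul_div_le_of_nonneg _ (hs.nonneg q)).trans hs.sum_le_one
  Tv_le := by
    rw [Tv_liftFst f hP]
    exact (Tv_mul_div_le hs.nonneg).trans hs.Tv_le
  marginal_le y := by
    rw [← sum_pushFst_fst f, ← sum_pushFst_fst f P, pushFst_liftFst]
    exact (sum_le_sum fun z _ => mul_div_le_of_nonneg _ (hs.nonneg (z, y))).trans (hs.marginal_le y)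

lemma Dmax_liftFst_le (hP : ∀ p, 0 ≤ P p) (hP1 : ∑ p, P p = 1)
    (hs : IsSmoothing ε (pushFst f P) Q') {p₀ : X × Y} (hp₀ : 0 < liftFst f P Q' p₀) :
    Dmax (liftFst f P Q') (fun p => ∑ a, P (a, p.2)) ≤
      Dmax Q' (fun q => ∑ z, pushFst f P (z, q.2)) :=
  Dmax_le_Dmax_of_subset (fun p => marginal_nonneg hP p.2) (fun p => marginal_le_one hP hP1 p.2)
    hp₀ hs.exists_forall_le_mul fun l hl p =>
      (liftFst_le f hP hs.nonneg p).trans ((hl (f p.1, p.2)).trans_eq (by rw [sum_pushFst_fst]))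

end Lift

theorem stmt8_general {X Y Z : Type*} [Fintype X] [Fintype Y] [Fintype Z]
    (P : X × Y → ℝ) (f : X → Z) (ε : ℝ)
    (hP : ∀ p, 0 ≤ P p) (hP1 : ∑ p, P p = 1)
    (hε0 : 0 ≤ ε) :
    Hmin ε (fun q : Z × Y => ∑ x, if f x = q.1 then P (x, q.2) else 0)
      ≤ Hmin ε P := by
  change Hmin ε (pushFst f P) ≤ Hmin ε P
  have hQ := pushFst_nonneg f hP
  have hQ1 : ∑ q, pushFst f P q = 1 := (sum_pushFst f P).trans hP1
  rcases lt_or_ge ε 1 with hε | hε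
  · obtain ⟨c, hc, hmax⟩ := exists_pos_forall_isSmoothing_exists_le hε hP1
    rw [Hmin_eq_sSup_smoothedEntropies, Hmin_eq_sSup_smoothedEntropies]
    refine csSup_le ⟨_, pushFst f P, IsSmoothing.self hε0 hQ hQ1.le, rfl⟩ ?_
    rintro _ ⟨Q', hs, rfl⟩
    have hlift := hs.liftFst f hP
    obtain ⟨p, hp⟩ := hmax _ hlift
    exact le_csSup_of_le (bddAbove_smoothedEntropies hε hP hP1) ⟨_, hlift, rfl⟩
      (neg_le_neg (Dmax_liftFst_le f hP hP1 hs (hc.trans_le hp)))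
  · rw [Hmin_of_one_le hε hQ hQ1, Hmin_of_one_le hε hP hP1]

theorem stmt8 {X Y Z : Type*} [Fintype X] [Fintype Y] [Fintype Z]
    (P : X × Y → ℝ) (f : X → Z) (ε : ℝ)
    (hP : ∀ p, 0 ≤ P p) (hP1 : ∑ p, P p = 1)
    (hε0 : 0 ≤ ε) (hε1 : ε ≤ 1) :
    Hmin ε (fun q : Z × Y => ∑ x, if f x = q.1 then P (x, q.2) else 0)
      ≤ Hmin ε P :=
  stmt8_general P f ε hP hP1 hε0
end

section
/- Dimension bound for partially smoothed conditional min-entropy (classical case): for a distribution P_{XZY} on finite X × Z × Y, H_min^{ε,T}(XZ|Ẏ)_P ≤ H_min^{ε,T}(X|Ẏ)_P + log₂|Z|. -/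
open scoped BigOperators
open Classical Real

/-!
Marginalizing a smoothed distribution `P'` of `P_{XZY}` over `Z` gives a smoothing of
`P_{XY}` (trace distance only decreases, the `Y`-marginal is unchanged) whose max-divergence
from `1_X × P_Y` exceeds that of `P'` from `1_{XZ} × P_Y` by at most `log₂ |Z|`, since summing
`P' ≤ λ (1_{XZ} × P_Y)` over `z` gives `P'_{XY} ≤ |Z| λ (1_X × P_Y)`. This bounds every element
of the supremum on the left. The junk value `sSup = 0` of unbounded sets is handled by the converse
lifting `P'' ↦ P'' ⊗ P_{Z|XY}`, which preserves smoothings and does not increase the divergence,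
and by `P_{XY}` itself being a smoothing with nonnegative entropy.
-/

open Finset

theorem sSup_le_sSup_add_of_exists_le {S T : Set ℝ} {c : ℝ} (hc : 0 ≤ c)
    (hT : ∃ t ∈ T, 0 ≤ t) (hST : ∀ s ∈ S, ∃ t ∈ T, s ≤ t + c)
    (hTS : ∀ t ∈ T, ∃ s ∈ S, t ≤ s) : sSup S ≤ sSup T + c := by
  obtain ⟨t₀, ht₀, ht₀_nonneg⟩ := hT
  by_cases hbdd : BddAbove T
  · refine Real.sSup_le (fun s hs => ?_) (by linarith [le_csSup hbdd ht₀])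
    obtain ⟨t, ht, hst⟩ := hST s hs
    linarith [le_csSup hbdd ht]
  · have hS : ¬BddAbove S := fun ⟨b, hb⟩ =>
      hbdd ⟨b, fun t ht => let ⟨s, hs, hts⟩ := hTS t ht; hts.trans (hb hs)⟩
    rw [Real.sSup_of_not_bddAbove hS, Real.sSup_of_not_bddAbove hbdd, zero_add]
    exact hc

section Dmax
variable {α β : Type*}

def dmaxSet (P R : α → ℝ) : Set ℝ := {l | ∀ x, P x ≤ l * R x}

theorem Dmax_eq_logb_sInf [Fintype α] (P R : α → ℝ) :
    Dmax P R = logb 2 (sInf (dmaxSet P R)) :=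
  rfl

theorem nonneg_of_mem_dmaxSet {P R : α → ℝ} {l : ℝ} (hl : l ∈ dmaxSet P R) {x : α}
    (hPx : 0 ≤ P x) (hRx : 0 < R x) : 0 ≤ l :=
  nonneg_of_mul_nonneg_left (hPx.trans (hl x)) hRx

theorem pos_of_mem_dmaxSet {P R : α → ℝ} {l : ℝ} (hl : l ∈ dmaxSet P R) {x : α}
    (hPx : 0 < P x) (hRx : 0 ≤ R x) : 0 < l :=
  pos_of_mul_pos_left (hPx.trans_le (hl x)) hRx

theorem sInf_dmaxSet_pos {P R : α → ℝ} (hne : (dmaxSet P R).Nonempty) {x : α}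
    (hPx : 0 < P x) (hRx : 0 ≤ R x) : 0 < sInf (dmaxSet P R) := by
  obtain ⟨l₀, hl₀⟩ := id hne
  have hRx' : 0 < R x := by
    by_contra! h
    linarith [hl₀ x, mul_nonpos_of_nonneg_of_nonpos (pos_of_mem_dmaxSet hl₀ hPx hRx).le h]
  exact (div_pos hPx hRx').trans_le
    (le_csInf hne fun l hl => (div_le_iff₀ hRx').2 (hl x))

theorem Dmax_zero_left [Fintype α] {R : α → ℝ} {x : α} (hRx : 0 < R x) : Dmax 0 R = 0 := by
  have hleast : IsLeast (dmaxSet 0 R) 0 :=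
    ⟨fun y => by simp, fun _ hl => nonneg_of_mem_dmaxSet hl le_rfl hRx⟩
  rw [Dmax_eq_logb_sInf, hleast.csInf_eq, logb_zero]

theorem Dmax_nonpos_of_le [Fintype α] {P R : α → ℝ} (hP : 0 ≤ P) (hPR : P ≤ R) {x : α}
    (hRx : 0 < R x) : Dmax P R ≤ 0 := by
  have hone : (1 : ℝ) ∈ dmaxSet P R := fun y => by simpa using hPR y
  have hlb : ∀ l ∈ dmaxSet P R, 0 ≤ l := fun _ hl => nonneg_of_mem_dmaxSet hl (hP x) hRx
  exact logb_nonpos one_lt_two (le_csInf ⟨1, hone⟩ hlb) (csInf_le ⟨0, hlb⟩ hone)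

theorem Dmax_le_logb_add_Dmax [Fintype α] [Fintype β] {P R : α → ℝ} {P' R' : β → ℝ} {c : ℝ}
    (hc : 1 ≤ c) (hP' : 0 ≤ P') (hR' : 0 ≤ R') {x : α} (hRx : 0 < R x) {y : β}
    (hRy : 0 < R' y) (hne : (dmaxSet P R).Nonempty) (hzero : P' = 0 → P = 0)
    (hmap : ∀ l ∈ dmaxSet P R, c * l ∈ dmaxSet P' R') :
    Dmax P' R' ≤ logb 2 c + Dmax P R := by
  -- `Dmax 0 R = logb 2 0 = 0` is a junk value, so monotonicity of `logb` does not apply here.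
  by_cases h0 : P' = 0
  · rw [h0, hzero h0, Dmax_zero_left hRy, Dmax_zero_left hRx, add_zero]
    exact logb_nonneg one_lt_two hc
  obtain ⟨y₀, hy₀⟩ : ∃ y, 0 < P' y := by
    by_contra! h
    exact h0 (funext fun y => le_antisymm (h y) (hP' y))
  have hc0 : 0 < c := one_pos.trans_le hc
  have hbdd' : BddBelow (dmaxSet P' R') :=
    ⟨0, fun _ hl => (pos_of_mem_dmaxSet hl hy₀ (hR' y₀)).le⟩
  have hpos' := sInf_dmaxSet_pos ⟨_, hmap _ hne.some_mem⟩ hy₀ (hR' y₀)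
  have hle : sInf (dmaxSet P' R') ≤ c * sInf (dmaxSet P R) := (div_le_iff₀' hc0).1 <|
    le_csInf hne fun l hl => (div_le_iff₀' hc0).2 (csInf_le hbdd' (hmap l hl))
  have hpos : 0 < sInf (dmaxSet P R) := pos_of_mul_pos_right (hpos'.trans_le hle) hc0.le
  rw [Dmax_eq_logb_sInf, Dmax_eq_logb_sInf, ← logb_mul hc0.ne' hpos.ne']
  exact logb_le_logb_of_le one_lt_two hpos' hle

end Dmax

section Smoothing
variable {A Y : Type*} [Fintype A]

def marginalY (P : A × Y → ℝ) (y : Y) : ℝ := ∑ a, P (a, y)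

structure IsSmoothing_s14 [Fintype Y] (ε : ℝ) (P P' : A × Y → ℝ) : Prop where
  nonneg : 0 ≤ P'
  sum_le_one : ∑ p, P' p ≤ 1
  Tv_le : Tv P' P ≤ ε
  marginalY_le : marginalY P' ≤ marginalY P

theorem Hmin_eq_sSup_image [Fintype Y] (ε : ℝ) (P : A × Y → ℝ) :
    Hmin ε P =
      sSup ((fun P' => -Dmax P' (fun p => marginalY P p.2)) '' {P' | IsSmoothing_s14 ε P P'}) := by
  refine congrArg sSup (Set.ext fun h => ⟨?_, ?_⟩)
  · rintro ⟨P', h0, h1, h2, h3, rfl⟩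
    exact ⟨P', ⟨h0, h1, h2, h3⟩, rfl⟩
  · rintro ⟨P', ⟨h0, h1, h2, h3⟩, rfl⟩
    exact ⟨P', h0, h1, h2, h3, rfl⟩

theorem le_marginalY {P : A × Y → ℝ} (hP : 0 ≤ P) (p : A × Y) : P p ≤ marginalY P p.2 :=
  single_le_sum (f := fun a => P (a, p.2)) (fun _ _ => hP _) (mem_univ p.1)

theorem marginalY_nonneg {P : A × Y → ℝ} (hP : 0 ≤ P) : 0 ≤ marginalY P :=
  fun _ => sum_nonneg fun _ _ => hP _

theorem isSmoothing_self [Fintype Y] {ε : ℝ} {P : A × Y → ℝ} (hP : 0 ≤ P) (hP1 : ∑ p, P p ≤ 1)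
    (hε : 0 ≤ ε) : IsSmoothing_s14 ε P P where
  nonneg := hP
  sum_le_one := hP1
  Tv_le := by simpa [Tv] using hε
  marginalY_le := le_rfl

theorem Dmax_marginalY_nonpos [Fintype Y] {P : A × Y → ℝ} (hP : 0 ≤ P) {p : A × Y}
    (hp : 0 < marginalY P p.2) : Dmax P (fun p => marginalY P p.2) ≤ 0 :=
  Dmax_nonpos_of_le hP (le_marginalY hP) hp

namespace IsSmoothing_s14
variable [Fintype Y] {ε : ℝ} {P P' : A × Y → ℝ}

theorem nonneg_marginalY (h : IsSmoothing_s14 ε P P') : 0 ≤ marginalY P :=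
  (marginalY_nonneg h.nonneg).trans h.marginalY_le

theorem one_mem_dmaxSet (h : IsSmoothing_s14 ε P P') :
    (1 : ℝ) ∈ dmaxSet P' (fun p => marginalY P p.2) :=
  fun p => (one_mul (marginalY P p.2)).symm ▸
    (le_marginalY h.nonneg p).trans (h.marginalY_le p.2)

end IsSmoothing_s14

end Smoothing

section Marginalization
variable {X Z Y : Type*} [Fintype X] [Fintype Z] [Fintype Y]

def margZ (P : (X × Z) × Y → ℝ) (q : X × Y) : ℝ := ∑ z, P ((q.1, z), q.2)

theorem sum_margZ (P : (X × Z) × Y → ℝ) : ∑ q, margZ P q = ∑ p, P p := by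
  simp only [margZ, Fintype.sum_prod_type]
  exact sum_congr rfl fun _ _ => sum_comm

omit [Fintype Y] in
theorem marginalY_margZ (P : (X × Z) × Y → ℝ) : marginalY (margZ P) = marginalY P :=
  funext fun y => (Fintype.sum_prod_type fun a => P (a, y)).symm

omit [Fintype X] [Fintype Y] in
theorem margZ_nonneg {P : (X × Z) × Y → ℝ} (hP : 0 ≤ P) : 0 ≤ margZ P :=
  fun _ => sum_nonneg fun _ _ => hP _

omit [Fintype X] [Fintype Y] in
theorem le_margZ {P : (X × Z) × Y → ℝ} (hP : 0 ≤ P) (p : (X × Z) × Y) :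
    P p ≤ margZ P (p.1.1, p.2) :=
  single_le_sum (f := fun z => P ((p.1.1, z), p.2)) (fun _ _ => hP _) (mem_univ p.1.2)

theorem Tv_margZ_le (P P' : (X × Z) × Y → ℝ) : Tv (margZ P') (margZ P) ≤ Tv P' P := by
  have habs : ∑ q, |margZ P' q - margZ P q| ≤ ∑ p, |P' p - P p| := by
    rw [← sum_margZ fun p => |P' p - P p|]
    refine sum_le_sum fun q _ => ?_
    rw [margZ, margZ, ← sum_sub_distrib]
    exact abs_sum_le_sum_abs _ _
  simp only [Tv, sum_margZ]
  linarith

theorem isSmoothing_margZ {ε : ℝ} {P P' : (X × Z) × Y → ℝ} (h : IsSmoothing_s14 ε P P') :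
    IsSmoothing_s14 ε (margZ P) (margZ P') where
  nonneg := margZ_nonneg h.nonneg
  sum_le_one := (sum_margZ P').symm ▸ h.sum_le_one
  Tv_le := (Tv_margZ_le P P').trans h.Tv_le
  marginalY_le := by simpa only [marginalY_margZ] using h.marginalY_le

theorem Dmax_margZ_le {ε : ℝ} {P P' : (X × Z) × Y → ℝ} (h : IsSmoothing_s14 ε P P')
    {p : (X × Z) × Y} (hp : 0 < marginalY P p.2) :
    Dmax (margZ P') (fun q => marginalY (margZ P) q.2)
      ≤ logb 2 (Fintype.card Z) + Dmax P' (fun p => marginalY P p.2) := by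
  have hcard : (1 : ℝ) ≤ Fintype.card Z := by
    exact_mod_cast Fintype.card_pos_iff.2 ⟨p.1.2⟩
  rw [marginalY_margZ]
  refine Dmax_le_logb_add_Dmax hcard (margZ_nonneg h.nonneg) (fun q => h.nonneg_marginalY q.2)
    (x := p) hp (y := (p.1.1, p.2)) hp ⟨1, h.one_mem_dmaxSet⟩ (fun h0 => ?_) fun l hl q => ?_
  · exact funext fun p =>
      le_antisymm ((le_margZ h.nonneg p).trans_eq (congrFun h0 _)) (h.nonneg p)
  · calc margZ P' q ≤ ∑ _z : Z, l * marginalY P q.2 :=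
          sum_le_sum fun z _ => hl ((q.1, z), q.2)
      _ = Fintype.card Z * l * marginalY P q.2 := by
        rw [sum_const, card_univ, nsmul_eq_mul, mul_assoc]

def liftZ (K : (X × Z) × Y → ℝ) (F : X × Y → ℝ) (p : (X × Z) × Y) : ℝ := F (p.1.1, p.2) * K p

section Lift
variable {K : (X × Z) × Y → ℝ}

omit [Fintype X] [Fintype Y] in
theorem margZ_liftZ (hK1 : margZ K = 1) (F : X × Y → ℝ) : margZ (liftZ K F) = F :=
  funext fun q => by
    simp only [margZ, liftZ, ← mul_sum]
    rw [show ∑ z, K ((q.1, z), q.2) = 1 from congrFun hK1 q, mul_one]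

omit [Fintype X] [Fintype Y] in
theorem liftZ_le (hK : 0 ≤ K) (hK1 : margZ K = 1) {F : X × Y → ℝ} (hF : 0 ≤ F)
    (p : (X × Z) × Y) : liftZ K F p ≤ F (p.1.1, p.2) :=
  mul_le_of_le_one_right (hF _) ((le_margZ hK p).trans_eq (congrFun hK1 _))

theorem sum_liftZ (hK1 : margZ K = 1) (F : X × Y → ℝ) : ∑ p, liftZ K F p = ∑ q, F q := by
  rw [← sum_margZ, margZ_liftZ hK1]

theorem Tv_liftZ (hK : 0 ≤ K) (hK1 : margZ K = 1) (F G : X × Y → ℝ) :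
    Tv (liftZ K F) (liftZ K G) = Tv F G := by
  have habs : ∑ p, |liftZ K F p - liftZ K G p| = ∑ p, liftZ K (fun q => |F q - G q|) p :=
    sum_congr rfl fun p _ => by
      rw [liftZ, liftZ, liftZ, ← sub_mul, abs_mul, abs_of_nonneg (hK p)]
  rw [Tv, Tv, habs, sum_liftZ hK1, sum_liftZ hK1, sum_liftZ hK1]

theorem isSmoothing_liftZ (hK : 0 ≤ K) (hK1 : margZ K = 1) {ε : ℝ} {G P'' : X × Y → ℝ}
    (h : IsSmoothing_s14 ε G P'') : IsSmoothing_s14 ε (liftZ K G) (liftZ K P'') where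
  nonneg := fun p => mul_nonneg (h.nonneg _) (hK p)
  sum_le_one := (sum_liftZ hK1 P'').symm ▸ h.sum_le_one
  Tv_le := (Tv_liftZ hK hK1 P'' G).trans_le h.Tv_le
  marginalY_le := by
    rw [← marginalY_margZ, ← marginalY_margZ (liftZ K G), margZ_liftZ hK1, margZ_liftZ hK1]
    exact h.marginalY_le

theorem Dmax_liftZ_le (hK : 0 ≤ K) (hK1 : margZ K = 1) {ε : ℝ} {G P'' : X × Y → ℝ}
    (h : IsSmoothing_s14 ε G P'') {p : (X × Z) × Y} (hp : 0 < marginalY G p.2) :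
    Dmax (liftZ K P'') (fun p => marginalY (liftZ K G) p.2)
      ≤ Dmax P'' (fun q => marginalY G q.2) := by
  rw [← marginalY_margZ (liftZ K G), margZ_liftZ hK1]
  have hmap : ∀ l ∈ dmaxSet P'' (fun q => marginalY G q.2),
      1 * l ∈ dmaxSet (liftZ K P'') (fun p => marginalY G p.2) := fun l hl p =>
    (liftZ_le hK hK1 h.nonneg p).trans ((one_mul l).symm ▸ hl _)
  have hzero : liftZ K P'' = 0 → P'' = 0 := fun h0 => by
    rw [← margZ_liftZ hK1 P'', h0]
    exact funext fun _ => sum_eq_zero fun _ _ => rfl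
  simpa using Dmax_le_logb_add_Dmax le_rfl (isSmoothing_liftZ hK hK1 h).nonneg
    (fun p => h.nonneg_marginalY p.2) (x := (p.1.1, p.2)) hp (y := p) hp
    ⟨1, h.one_mem_dmaxSet⟩ hzero hmap

end Lift

-- The conditional distribution `P_{Z|XY}`, taken uniform where `P_{XY}` vanishes.
noncomputable def condZ (P : (X × Z) × Y → ℝ) (p : (X × Z) × Y) : ℝ :=
  if margZ P (p.1.1, p.2) = 0 then (Fintype.card Z : ℝ)⁻¹ else P p / margZ P (p.1.1, p.2)

omit [Fintype X] [Fintype Y] in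
theorem condZ_nonneg {P : (X × Z) × Y → ℝ} (hP : 0 ≤ P) : 0 ≤ condZ P := fun p => by
  unfold condZ
  split_ifs
  · positivity
  · exact div_nonneg (hP p) (margZ_nonneg hP _)

omit [Fintype X] [Fintype Y] in
theorem margZ_condZ [Nonempty Z] (P : (X × Z) × Y → ℝ) : margZ (condZ P) = 1 :=
  funext fun q => by
    show ∑ z, (if margZ P q = 0 then _ else P ((q.1, z), q.2) / margZ P q) = 1
    split_ifs with hq
    · rw [sum_const, card_univ, nsmul_eq_mul, mul_inv_cancel₀ (by simp)]
    · exact (sum_div _ _ _).symm.trans (div_self hq)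

omit [Fintype X] [Fintype Y] in
theorem liftZ_condZ_margZ {P : (X × Z) × Y → ℝ} (hP : 0 ≤ P) :
    liftZ (condZ P) (margZ P) = P :=
  funext fun p => by
    unfold liftZ condZ
    split_ifs with h
    · rw [h, zero_mul]
      exact (le_antisymm ((le_margZ hP p).trans_eq h) (hP p)).symm
    · exact mul_div_cancel₀ _ h

theorem exists_isSmoothing_Dmax_le_of_margZ [Nonempty Z] {ε : ℝ} {P : (X × Z) × Y → ℝ}
    {P'' : X × Y → ℝ} (hP : 0 ≤ P) (h : IsSmoothing_s14 ε (margZ P) P'') {p : (X × Z) × Y}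
    (hp : 0 < marginalY P p.2) :
    ∃ P', IsSmoothing_s14 ε P P' ∧
      Dmax P' (fun p => marginalY P p.2) ≤ Dmax P'' (fun q => marginalY (margZ P) q.2) := by
  have hK := condZ_nonneg hP
  have hK1 := margZ_condZ P
  refine ⟨liftZ (condZ P) P'', ?_, ?_⟩
  · simpa only [liftZ_condZ_margZ hP] using isSmoothing_liftZ hK hK1 h
  · simpa only [liftZ_condZ_margZ hP] using
      Dmax_liftZ_le hK hK1 h (p := p) (by rwa [marginalY_margZ])

end Marginalization

theorem stmt14_general {X Z Y : Type*} [Fintype X] [Fintype Z] [Fintype Y]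
    (P : (X × Z) × Y → ℝ) (ε : ℝ)
    (hP : ∀ p, 0 ≤ P p) (hP1 : ∑ p, P p = 1)
    (hε0 : 0 ≤ ε) :
    Hmin ε P ≤ Hmin ε (fun q : X × Y => ∑ z, P ((q.1, z), q.2))
      + Real.logb 2 (Fintype.card Z) := by
  obtain ⟨p, -, hp⟩ : ∃ p ∈ univ, (0 : ℝ) < P p :=
    exists_lt_of_sum_lt (f := fun _ => 0) (by simp [hP1])
  have hpY : 0 < marginalY P p.2 := hp.trans_le (le_marginalY hP p)
  have : Nonempty Z := ⟨p.1.2⟩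
  change Hmin ε P ≤ Hmin ε (margZ P) + _
  rw [Hmin_eq_sSup_image, Hmin_eq_sSup_image]
  refine sSup_le_sSup_add_of_exists_le
    (logb_nonneg one_lt_two (by exact_mod_cast Fintype.card_pos)) ?_ ?_ ?_
  · have hself := isSmoothing_self (margZ_nonneg hP) ((sum_margZ P).trans hP1).le hε0
    exact ⟨_, ⟨margZ P, hself, rfl⟩, neg_nonneg.2 <|
      Dmax_marginalY_nonpos (margZ_nonneg hP) (p := (p.1.1, p.2)) (by rwa [marginalY_margZ])⟩
  · rintro _ ⟨P', hP', rfl⟩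
    exact ⟨_, ⟨margZ P', isSmoothing_margZ hP', rfl⟩, by linarith [Dmax_margZ_le hP' hpY]⟩
  · rintro _ ⟨P'', hP'', rfl⟩
    obtain ⟨P', hP', hle⟩ := exists_isSmoothing_Dmax_le_of_margZ hP hP'' hpY
    exact ⟨_, ⟨P', hP', rfl⟩, neg_le_neg hle⟩

theorem stmt14 {X Z Y : Type*} [Fintype X] [Fintype Z] [Fintype Y]
    (P : (X × Z) × Y → ℝ) (ε : ℝ)
    (hP : ∀ p, 0 ≤ P p) (hP1 : ∑ p, P p = 1)
    (hε0 : 0 ≤ ε) (hε1 : ε ≤ 1) :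
    Hmin ε P ≤ Hmin ε (fun q : X × Y => ∑ z, P ((q.1, z), q.2))
      + Real.logb 2 (Fintype.card Z) :=
  stmt14_general P ε hP hP1 hε0
end

section
/- Converse for classical state splitting via max-divergence: let P_{XST} be a distribution on finite X × S × T with P_{XS} = P_X × P_S (message T of size |T| = 2^R, shared randomness S independent of X), and let D : S × T → Y be a (possibly randomized) decoder given by a stochastic map. Set P'_{XY} := (id_X ⊗ D)(P_{XST}). Then R ≥ D_max(P_{XST} ‖ P_X × P_S × U_T) ≥ min over distributions Q_Y of D_max(P'_{XY} ‖ P_X × Q_Y), where U_T is uniform on T. -/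
open scoped BigOperators
open Classical Real

lemma one_le_of_mem {α : Type*} [Fintype α] (P Q : α → ℝ)
    (hP1 : ∑ p, P p = 1) (hQ1 : ∑ p, Q p = 1) {l : ℝ}
    (hl : ∀ p, P p ≤ l * Q p) : (1:ℝ) ≤ l := by
  calc (1:ℝ) = ∑ p, P p := hP1.symm
    _ ≤ ∑ p, l * Q p := Finset.sum_le_sum (fun p _ => hl p)
    _ = l := by rw [← Finset.mul_sum, hQ1, mul_one]

lemma dmax_nonneg {α : Type*} [Fintype α] (P Q : α → ℝ)
    (hP1 : ∑ p, P p = 1) (hQ1 : ∑ p, Q p = 1) : 0 ≤ Dmax P Q := by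
  unfold Dmax
  by_cases hne : Set.Nonempty {l : ℝ | ∀ p, P p ≤ l * Q p}
  · have h1 : (1:ℝ) ≤ sInf {l : ℝ | ∀ p, P p ≤ l * Q p} :=
      le_csInf hne (fun l hl => one_le_of_mem P Q hP1 hQ1 hl)
    exact Real.logb_nonneg one_lt_two h1
  · rw [Set.not_nonempty_iff_eq_empty.mp hne, Real.sInf_empty, Real.logb_zero]

lemma dmax_le_dmax {α β : Type*} [Fintype α] [Fintype β] (P Q : α → ℝ) (P' Q' : β → ℝ)
    (hP'1 : ∑ p, P' p = 1) (hQ'1 : ∑ p, Q' p = 1)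
    (hch : ∀ l : ℝ, (∀ p, P p ≤ l * Q p) → ∀ p, P' p ≤ l * Q' p)
    (hne : ∃ l : ℝ, ∀ p, P p ≤ l * Q p) :
    Dmax P' Q' ≤ Dmax P Q := by
  have hsub : {l : ℝ | ∀ p, P p ≤ l * Q p} ⊆ {l : ℝ | ∀ p, P' p ≤ l * Q' p} :=
    fun l hl => hch l hl
  have hne' : Set.Nonempty {l : ℝ | ∀ p, P' p ≤ l * Q' p} := by
    obtain ⟨l, hl⟩ := hne
    exact ⟨l, hch l hl⟩
  have hlb : ∀ l ∈ {l : ℝ | ∀ p, P' p ≤ l * Q' p}, (1:ℝ) ≤ l :=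
    fun l hl => one_le_of_mem P' Q' hP'1 hQ'1 hl
  have h2 : sInf {l : ℝ | ∀ p, P' p ≤ l * Q' p} ≤ sInf {l : ℝ | ∀ p, P p ≤ l * Q p} :=
    csInf_le_csInf ⟨1, hlb⟩ hne hsub
  have h3 : (1:ℝ) ≤ sInf {l : ℝ | ∀ p, P' p ≤ l * Q' p} := le_csInf hne' hlb
  unfold Dmax
  exact Real.logb_le_logb_of_le one_lt_two (by linarith) h2

theorem stmt17 {X S T Y : Type*} [Fintype X] [Fintype S] [Fintype T] [Fintype Y]
    (P : X × S × T → ℝ) (D : S × T → Y → ℝ) (R : ℝ)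
    (hP : ∀ p, 0 ≤ P p) (hP1 : ∑ p, P p = 1)
    (hT : (Fintype.card T : ℝ) = (2:ℝ) ^ R)
    (hindep : ∀ x s, ∑ t, P (x, s, t)
      = (∑ q : S × T, P (x, q)) * (∑ r : X × T, P (r.1, s, r.2)))
    (hD : ∀ q y, 0 ≤ D q y) (hD1 : ∀ q, ∑ y, D q y = 1) :
    R ≥ Dmax P (fun p => (∑ q : S × T, P (p.1, q)) * (∑ r : X × T, P (r.1, p.2.1, r.2))
          * (1 / (Fintype.card T : ℝ))) ∧
    Dmax P (fun p => (∑ q : S × T, P (p.1, q)) * (∑ r : X × T, P (r.1, p.2.1, r.2))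
          * (1 / (Fintype.card T : ℝ)))
      ≥ sInf {r : ℝ | ∃ Q : Y → ℝ, (∀ y, 0 ≤ Q y) ∧ (∑ y, Q y = 1) ∧
          r = Dmax (fun p : X × Y => ∑ q : S × T, P (p.1, q) * D q p.2)
                (fun p : X × Y => (∑ q : S × T, P (p.1, q)) * Q p.2)} := by
  classical
  -- abbreviations
  set PX : X → ℝ := fun x => ∑ q : S × T, P (x, q) with hPXdef
  set PS : S → ℝ := fun s => ∑ r : X × T, P (r.1, s, r.2) with hPSdef
  have hcT : (0:ℝ) < (Fintype.card T : ℝ) := by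
    rw [hT]; exact Real.rpow_pos_of_pos two_pos R
  have hcT1 : (1:ℝ) ≤ (Fintype.card T : ℝ) := by
    have : 0 < Fintype.card T := by exact_mod_cast hcT
    exact_mod_cast this
  -- marginals
  have hPX1 : ∑ x, PX x = 1 := by
    rw [← hP1, Fintype.sum_prod_type]
  have hPS1 : ∑ s, PS s = 1 := by
    have e1 : ∑ s, PS s = ∑ s, ∑ x, ∑ t, P (x, s, t) := by
      apply Finset.sum_congr rfl
      intro s _
      simp only [hPSdef]
      rw [Fintype.sum_prod_type]
    have e2 : ∑ p : X × S × T, P p = ∑ x, ∑ s, ∑ t, P (x, s, t) := by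
      rw [Fintype.sum_prod_type]
      apply Finset.sum_congr rfl
      intro x _
      rw [Fintype.sum_prod_type]
    rw [e1, Finset.sum_comm, ← e2, hP1]
  -- the reference distribution
  have hQt1 : ∑ p : X × S × T, (PX p.1 * PS p.2.1 * (1 / (Fintype.card T : ℝ))) = 1 := by
    rw [Fintype.sum_prod_type]
    have : ∀ x : X, ∑ q : S × T, PX x * PS q.1 * (1 / (Fintype.card T : ℝ)) = PX x := by
      intro x
      rw [Fintype.sum_prod_type]
      have : ∀ s : S, ∑ _t : T, PX x * PS s * (1 / (Fintype.card T : ℝ)) = PX x * PS s := by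
        intro s
        rw [Finset.sum_const, Finset.card_univ, nsmul_eq_mul]
        field_simp
      rw [Finset.sum_congr rfl (fun s _ => this s), ← Finset.mul_sum, hPS1, mul_one]
    rw [Finset.sum_congr rfl (fun x _ => this x), hPX1]
  -- pointwise bound
  have factA : ∀ p : X × S × T, P p ≤ PX p.1 * PS p.2.1 := by
    rintro ⟨x, s, t⟩
    have h1 : P (x, s, t) ≤ ∑ t', P (x, s, t') :=
      Finset.single_le_sum (fun i _ => hP (x, s, i)) (Finset.mem_univ t)
    calc P (x, s, t) ≤ ∑ t', P (x, s, t') := h1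
      _ = PX x * PS s := hindep x s
  have hmem : ∀ p : X × S × T,
      P p ≤ (2:ℝ) ^ R * (PX p.1 * PS p.2.1 * (1 / (Fintype.card T : ℝ))) := by
    intro p
    have : (2:ℝ) ^ R * (PX p.1 * PS p.2.1 * (1 / (Fintype.card T : ℝ)))
        = PX p.1 * PS p.2.1 := by
      rw [← hT]; field_simp
    rw [this]; exact factA p
  have hAne : Set.Nonempty {l : ℝ | ∀ p, P p ≤
      l * (PX p.1 * PS p.2.1 * (1 / (Fintype.card T : ℝ)))} := ⟨(2:ℝ) ^ R, hmem⟩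
  have hAlb : ∀ l ∈ {l : ℝ | ∀ p, P p ≤
      l * (PX p.1 * PS p.2.1 * (1 / (Fintype.card T : ℝ)))}, (1:ℝ) ≤ l :=
    fun l hl => one_le_of_mem P _ hP1 hQt1 hl
  constructor
  · -- Part 1
    have h1 : sInf {l : ℝ | ∀ p, P p ≤
        l * (PX p.1 * PS p.2.1 * (1 / (Fintype.card T : ℝ)))} ≤ (2:ℝ) ^ R :=
      csInf_le ⟨1, hAlb⟩ hmem
    have h3 : (1:ℝ) ≤ sInf {l : ℝ | ∀ p, P p ≤
        l * (PX p.1 * PS p.2.1 * (1 / (Fintype.card T : ℝ)))} := le_csInf hAne hAlb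
    have h4 : Real.logb 2 (sInf {l : ℝ | ∀ p, P p ≤
        l * (PX p.1 * PS p.2.1 * (1 / (Fintype.card T : ℝ)))})
        ≤ Real.logb 2 ((2:ℝ) ^ R) :=
      Real.logb_le_logb_of_le one_lt_two (by linarith) h1
    rw [Real.logb_rpow two_pos (by norm_num)] at h4
    exact h4
  · -- Part 2
    set Qstar : Y → ℝ := fun y => ∑ q : S × T, PS q.1 * (1 / (Fintype.card T : ℝ)) * D q y
      with hQsdef
    have hQs0 : ∀ y, 0 ≤ Qstar y := by
      intro y
      apply Finset.sum_nonneg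
      intro q _
      have hPSnn : 0 ≤ PS q.1 := Finset.sum_nonneg (fun r _ => hP _)
      exact mul_nonneg (mul_nonneg hPSnn (by positivity)) (hD q y)
    have hQs1 : ∑ y, Qstar y = 1 := by
      rw [hQsdef, Finset.sum_comm]
      have : ∀ q : S × T, ∑ y, PS q.1 * (1 / (Fintype.card T : ℝ)) * D q y
          = PS q.1 * (1 / (Fintype.card T : ℝ)) := by
        intro q; rw [← Finset.mul_sum, hD1, mul_one]
      rw [Finset.sum_congr rfl (fun q _ => this q), Fintype.sum_prod_type]
      have : ∀ s : S, ∑ _t : T, PS s * (1 / (Fintype.card T : ℝ)) = PS s := by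
        intro s
        rw [Finset.sum_const, Finset.card_univ, nsmul_eq_mul]
        field_simp
      rw [Finset.sum_congr rfl (fun s _ => this s), hPS1]
    -- P' sums to 1
    have hP'1 : ∑ p : X × Y, (∑ q : S × T, P (p.1, q) * D q p.2) = 1 := by
      rw [Fintype.sum_prod_type]
      have : ∀ x : X, ∑ y, ∑ q : S × T, P (x, q) * D q y = PX x := by
        intro x
        rw [Finset.sum_comm]
        apply Finset.sum_congr rfl
        intro q _
        rw [← Finset.mul_sum, hD1, mul_one]
      rw [Finset.sum_congr rfl (fun x _ => this x), hPX1]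
    have hQp1 : ∑ p : X × Y, PX p.1 * Qstar p.2 = 1 := by
      rw [Fintype.sum_prod_type]
      have : ∀ x : X, ∑ y, PX x * Qstar y = PX x := by
        intro x; rw [← Finset.mul_sum, hQs1, mul_one]
      rw [Finset.sum_congr rfl (fun x _ => this x), hPX1]
    -- data processing
    have hch : ∀ l : ℝ, (∀ p, P p ≤ l * (PX p.1 * PS p.2.1 * (1 / (Fintype.card T : ℝ))))
        → ∀ p : X × Y, (∑ q : S × T, P (p.1, q) * D q p.2) ≤ l * (PX p.1 * Qstar p.2) := by
      intro l hl
      rintro ⟨x, y⟩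
      calc ∑ q : S × T, P (x, q) * D q y
          ≤ ∑ q : S × T, l * (PX x * PS q.1 * (1 / (Fintype.card T : ℝ))) * D q y := by
            apply Finset.sum_le_sum
            intro q _
            exact mul_le_mul_of_nonneg_right (hl (x, q)) (hD q y)
        _ = l * (PX x * Qstar y) := by
            rw [hQsdef]
            rw [Finset.mul_sum, Finset.mul_sum]
            apply Finset.sum_congr rfl
            intro q _
            ring
    have hdp : Dmax (fun p : X × Y => ∑ q : S × T, P (p.1, q) * D q p.2)
        (fun p : X × Y => PX p.1 * Qstar p.2)
        ≤ Dmax P (fun p => PX p.1 * PS p.2.1 * (1 / (Fintype.card T : ℝ))) :=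
      dmax_le_dmax _ _ _ _ hP'1 hQp1 hch ⟨(2:ℝ) ^ R, hmem⟩
    have hmem2 : Dmax (fun p : X × Y => ∑ q : S × T, P (p.1, q) * D q p.2)
        (fun p : X × Y => PX p.1 * Qstar p.2)
        ∈ {r : ℝ | ∃ Q : Y → ℝ, (∀ y, 0 ≤ Q y) ∧ (∑ y, Q y = 1) ∧
          r = Dmax (fun p : X × Y => ∑ q : S × T, P (p.1, q) * D q p.2)
                (fun p : X × Y => PX p.1 * Q p.2)} :=
      ⟨Qstar, hQs0, hQs1, rfl⟩
    have hbdd : BddBelow {r : ℝ | ∃ Q : Y → ℝ, (∀ y, 0 ≤ Q y) ∧ (∑ y, Q y = 1) ∧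
          r = Dmax (fun p : X × Y => ∑ q : S × T, P (p.1, q) * D q p.2)
                (fun p : X × Y => PX p.1 * Q p.2)} := by
      refine ⟨0, ?_⟩
      rintro r ⟨Q, hQ0, hQ1, rfl⟩
      have hQp1' : ∑ p : X × Y, PX p.1 * Q p.2 = 1 := by
        rw [Fintype.sum_prod_type]
        have : ∀ x : X, ∑ y, PX x * Q y = PX x := by
          intro x; rw [← Finset.mul_sum, hQ1, mul_one]
        rw [Finset.sum_congr rfl (fun x _ => this x), hPX1]
      exact dmax_nonneg _ _ hP'1 hQp1'
    calc sInf {r : ℝ | ∃ Q : Y → ℝ, (∀ y, 0 ≤ Q y) ∧ (∑ y, Q y = 1) ∧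
          r = Dmax (fun p : X × Y => ∑ q : S × T, P (p.1, q) * D q p.2)
                (fun p : X × Y => PX p.1 * Q p.2)}
        ≤ Dmax (fun p : X × Y => ∑ q : S × T, P (p.1, q) * D q p.2)
            (fun p : X × Y => PX p.1 * Qstar p.2) := csInf_le hbdd hmem2
      _ ≤ _ := hdp
end

section
/- Classical two-universal hashing extraction bound for sub-normalized inputs (leftover hash lemma form used in the paper): let P̃_{XY} be a sub-normalized distribution on finite X × Y with P̃_{XY}(x,y) ≤ 2^{−k} P_Y(y) for all (x,y) (where P_Y is a fixed distribution on Y), and let {f^s : X → Z}_{s∈S} be a two-universal family of hash functions. Then T( (1/|S|)∑_s δ_s ⊗ Q̃^s_{ZY}, U_S × U_Z × P̃_Y ) ≤ (1/2)·√(|Z|·2^{−k}) where Q̃^s_{ZY}(z,y) := ∑_{x: f^s(x)=z} P̃_{XY}(x,y). -/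
/-! Fix a side value `y` and put `g = P̃(·, y)`. Expanding the square, the deviation of the
hashed weights from uniform, `∑ₛ ∑_z (g(f_s⁻¹ z) - ‖g‖₁/|Z|)²`, is a collision sum, which
two-universality bounds by `|S| ‖g‖₂²`. Cauchy–Schwarz over the `|S||Z|` pairs `(s, z)` turns this
into an `L¹` bound `√(|Z| ‖g‖₂²)`, and `g ≤ 2^{-k} P_Y(y)` gives `‖g‖₂² ≤ 2^{-k} P_Y(y) ‖g‖₁`.
A second Cauchy–Schwarz over `y`, with `∑ P_Y = 1` and `∑ P̃ ≤ 1`, yields `√(|Z| 2^{-k})`.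
The mass term of `T` vanishes because hashing preserves total weight. -/

open scoped BigOperators
open Classical Real

open Finset

section Hashing

variable {S X Z : Type*} [Fintype S] [Fintype Z]

def IsTwoUniversal (f : S → X → Z) : Prop :=
  ∀ x x', x ≠ x' →
    (∑ s, if f s x = f s x' then (1:ℝ) else 0) / (Fintype.card S : ℝ) ≤ 1 / (Fintype.card Z : ℝ)

noncomputable def pushforward [Fintype X] (h : X → Z) (g : X → ℝ) (z : Z) : ℝ :=
  ∑ x, if h x = z then g x else 0

theorem sum_pushforward [Fintype X] (h : X → Z) (g : X → ℝ) :
    ∑ z, pushforward h g z = ∑ x, g x := by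
  unfold pushforward
  rw [sum_comm]
  simp

theorem sum_pushforward_sq [Fintype X] (h : X → Z) (g : X → ℝ) :
    ∑ z, pushforward h g z ^ 2 = ∑ x, ∑ x', if h x = h x' then g x * g x' else 0 := by
  simp_rw [pushforward, sq, sum_mul_sum]
  rw [sum_comm]
  refine sum_congr rfl fun x _ => ?_
  rw [sum_comm]
  refine sum_congr rfl fun x' _ => ?_
  simp only [ite_mul, zero_mul, sum_ite_eq, mem_univ, if_true, mul_ite, mul_zero]

theorem sum_sq_pushforward_sub_mean [Fintype X] [Nonempty Z] (h : X → Z) (g : X → ℝ) :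
    ∑ z, (pushforward h g z - (∑ x, g x) / Fintype.card Z) ^ 2
      = ∑ z, pushforward h g z ^ 2 - (∑ x, g x) ^ 2 / Fintype.card Z := by
  have hZ : (Fintype.card Z : ℝ) ≠ 0 := by positivity
  simp only [sub_sq, sum_add_distrib, sum_sub_distrib, ← sum_mul, ← mul_sum,
    sum_pushforward, sum_const, card_univ, nsmul_eq_mul]
  field_simp
  ring

theorem IsTwoUniversal.card_collisions_le {f : S → X → Z} (hf : IsTwoUniversal f) (x x' : X) :
    (∑ s, if f s x = f s x' then (1:ℝ) else 0)
      ≤ Fintype.card S / Fintype.card Z + if x = x' then (Fintype.card S : ℝ) else 0 := by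
  by_cases hxx' : x = x'
  · subst hxx'
    simp only [if_true, sum_const, card_univ, nsmul_eq_mul, mul_one]
    exact le_add_of_nonneg_left (by positivity)
  · rcases (Fintype.card S).eq_zero_or_pos with hS | hS
    · simp [Fintype.card_eq_zero_iff.mp hS]
    · have := hf x x' hxx'
      rw [div_le_iff₀ (by positivity), one_div_mul_eq_div] at this
      rwa [if_neg hxx', add_zero]

theorem IsTwoUniversal.sum_sq_pushforward_sub_mean_le [Fintype X] [Nonempty Z] {f : S → X → Z}
    (hf : IsTwoUniversal f) {g : X → ℝ} (hg : ∀ x, 0 ≤ g x) :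
    ∑ s, ∑ z, (pushforward (f s) g z - (∑ x, g x) / Fintype.card Z) ^ 2
      ≤ Fintype.card S * ∑ x, g x ^ 2 := by
  have hcoll : ∑ s, ∑ x, ∑ x', (if f s x = f s x' then g x * g x' else 0)
      ≤ ∑ x, ∑ x', g x * g x' *
          ((Fintype.card S / Fintype.card Z : ℝ) + if x = x' then (Fintype.card S : ℝ) else 0) := by
    rw [sum_comm]
    refine sum_le_sum fun x _ => ?_
    rw [sum_comm]
    refine sum_le_sum fun x' _ => ?_
    calc ∑ s, (if f s x = f s x' then g x * g x' else 0)
        = g x * g x' * ∑ s, (if f s x = f s x' then (1:ℝ) else 0) := by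
          rw [mul_sum]; simp
      _ ≤ _ := mul_le_mul_of_nonneg_left (hf.card_collisions_le x x') (mul_nonneg (hg x) (hg x'))
  have hbound_eval : ∑ x, ∑ x', g x * g x' *
        ((Fintype.card S / Fintype.card Z : ℝ) + if x = x' then (Fintype.card S : ℝ) else 0)
      = Fintype.card S * ((∑ x, g x) ^ 2 / Fintype.card Z) + Fintype.card S * ∑ x, g x ^ 2 := by
    have hsq : (∑ x, g x) ^ 2 = ∑ x, ∑ x', g x * g x' := by rw [sq, sum_mul_sum]
    simp only [mul_add, sum_add_distrib, mul_ite, mul_zero, sum_ite_eq, mem_univ, if_true,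
      hsq, sum_div, mul_sum]
    congr 1
    · exact sum_congr rfl fun x _ => sum_congr rfl fun x' _ => by ring
    · exact sum_congr rfl fun x _ => by ring
  calc _ = ∑ s, ∑ x, ∑ x', (if f s x = f s x' then g x * g x' else 0)
        - Fintype.card S * ((∑ x, g x) ^ 2 / Fintype.card Z) := by
        simp only [sum_sq_pushforward_sub_mean, sum_pushforward_sq, sum_sub_distrib, sum_const,
          card_univ, nsmul_eq_mul]
    _ ≤ _ := by linarith

theorem IsTwoUniversal.sq_sum_abs_sub_uniform_le [Fintype X] [Nonempty S] [Nonempty Z]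
    {f : S → X → Z} (hf : IsTwoUniversal f) {g : X → ℝ} (hg : ∀ x, 0 ≤ g x) :
    (∑ s, ∑ z, |1 / (Fintype.card S : ℝ) * pushforward (f s) g z
        - 1 / (Fintype.card S : ℝ) * (1 / (Fintype.card Z : ℝ)) * ∑ x, g x|) ^ 2
      ≤ Fintype.card Z * ∑ x, g x ^ 2 := by
  have hS : (0:ℝ) < Fintype.card S := by exact_mod_cast Fintype.card_pos
  set D : S × Z → ℝ := fun p => pushforward (f p.1) g p.2 - (∑ x, g x) / Fintype.card Z
  have hterm : ∀ s z, |1 / (Fintype.card S : ℝ) * pushforward (f s) g z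
      - 1 / (Fintype.card S : ℝ) * (1 / (Fintype.card Z : ℝ)) * ∑ x, g x|
      = 1 / (Fintype.card S : ℝ) * |D (s, z)| := by
    intro s z
    conv_rhs => rw [← abs_of_pos (one_div_pos.mpr hS), ← abs_mul]
    congr 1
    simp only [D]
    ring
  calc _ = (1 / (Fintype.card S : ℝ)) ^ 2 * (∑ p, |D p|) ^ 2 := by
        simp only [hterm, ← mul_sum, mul_pow, Fintype.sum_prod_type]
    _ ≤ (1 / (Fintype.card S : ℝ)) ^ 2 * (Fintype.card (S × Z) * ∑ p, |D p| ^ 2) := by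
        gcongr
        exact sq_sum_le_card_mul_sum_sq
    _ = (1 / (Fintype.card S : ℝ)) ^ 2 * (Fintype.card S * Fintype.card Z)
          * ∑ s, ∑ z, (pushforward (f s) g z - (∑ x, g x) / Fintype.card Z) ^ 2 := by
        simp only [sq_abs, Fintype.sum_prod_type, Fintype.card_prod, D]
        push_cast
        ring
    _ ≤ (1 / (Fintype.card S : ℝ)) ^ 2 * (Fintype.card S * Fintype.card Z)
          * (Fintype.card S * ∑ x, g x ^ 2) := by
        gcongr
        exact hf.sum_sq_pushforward_sub_mean_le hg
    _ = Fintype.card Z * ∑ x, g x ^ 2 := by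
        field_simp

end Hashing

theorem Tv_eq_of_sum_eq {α : Type*} [Fintype α] {P Q : α → ℝ} (h : ∑ x, P x = ∑ x, Q x) :
    Tv P Q = 1 / 2 * ∑ x, |P x - Q x| := by
  rw [Tv, h, sub_self, abs_zero, mul_zero, add_zero]

theorem Fintype.sum_prod_prod_eq_sum_sum_sum {S Z Y M : Type*} [Fintype S] [Fintype Z]
    [Fintype Y] [AddCommMonoid M] (F : S × Z × Y → M) :
    ∑ q, F q = ∑ y, ∑ s, ∑ z, F (s, z, y) := by
  simp only [Fintype.sum_prod_type]
  exact (Finset.sum_congr rfl fun s _ => Finset.sum_comm).trans Finset.sum_comm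

theorem stmt18_general {X Y Z S : Type*} [Fintype X] [Fintype Y] [Fintype Z] [Fintype S]
    [Nonempty S] [Nonempty Z]
    (f : S → X → Z) (Pt : X × Y → ℝ) (PY : Y → ℝ) (k : ℝ)
    (huniv : ∀ x x', x ≠ x' →
      (∑ s, if f s x = f s x' then (1:ℝ) else 0) / (Fintype.card S : ℝ)
        ≤ 1 / (Fintype.card Z : ℝ))
    (hPt : ∀ p, 0 ≤ Pt p) (hPt1 : ∑ p, Pt p ≤ 1)
    (hPY : ∀ y, 0 ≤ PY y) (hPY1 : ∑ y, PY y = 1)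
    (hbound : ∀ p : X × Y, Pt p ≤ (2:ℝ) ^ (-k) * PY p.2) :
    Tv (fun q : S × Z × Y =>
          (1 / (Fintype.card S : ℝ)) * ∑ x, if f q.1 x = q.2.1 then Pt (x, q.2.2) else 0)
       (fun q : S × Z × Y =>
          (1 / (Fintype.card S : ℝ)) * (1 / (Fintype.card Z : ℝ)) * (∑ x, Pt (x, q.2.2)))
      ≤ (1/2) * Real.sqrt ((Fintype.card Z : ℝ) * (2:ℝ) ^ (-k)) := by
  have hZ : (0:ℝ) < Fintype.card Z := by exact_mod_cast Fintype.card_pos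
  have hf : IsTwoUniversal f := huniv
  have hcollision : ∀ y, ∑ x, Pt (x, y) ^ 2 ≤ 2 ^ (-k) * PY y * ∑ x, Pt (x, y) := fun y => by
    rw [mul_sum]
    exact sum_le_sum fun x _ => by
      rw [sq]; exact mul_le_mul_of_nonneg_right (hbound (x, y)) (hPt (x, y))
  have hmass : ∀ (y : Y) (s : S),
      ∑ z : Z, 1 / (Fintype.card S : ℝ) * pushforward (f s) (fun x => Pt (x, y)) z
      = ∑ _z : Z, 1 / (Fintype.card S : ℝ) * (1 / (Fintype.card Z : ℝ)) * ∑ x, Pt (x, y) := by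
    intro y s
    rw [← mul_sum, sum_pushforward, sum_const, card_univ, nsmul_eq_mul]
    field_simp
  rw [Tv_eq_of_sum_eq]
  · gcongr
    refine (le_abs_self _).trans (Real.abs_le_sqrt ?_)
    rw [Fintype.sum_prod_prod_eq_sum_sum_sum]
    calc _ ≤ (∑ y, Fintype.card Z * 2 ^ (-k) * PY y) * ∑ y, ∑ x, Pt (x, y) := by
          refine sum_sq_le_sum_mul_sum_of_sq_le_mul _ (fun y _ => by have := hPY y; positivity)
            (fun y _ => sum_nonneg fun x _ => hPt (x, y)) fun y _ => ?_
          refine (hf.sq_sum_abs_sub_uniform_le fun x => hPt (x, y)).trans ?_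
          rw [mul_assoc, mul_assoc, ← mul_assoc (2 ^ (-k))]
          exact mul_le_mul_of_nonneg_left (hcollision y) hZ.le
      _ ≤ Fintype.card Z * 2 ^ (-k) := by
          rw [← mul_sum, hPY1, mul_one, ← Fintype.sum_prod_type_right]
          exact mul_le_of_le_one_right (by positivity) hPt1
  · simp only [Fintype.sum_prod_prod_eq_sum_sum_sum]
    exact Finset.sum_congr rfl fun y _ => Finset.sum_congr rfl fun s _ => hmass y s

theorem stmt18 {X Y Z S : Type*} [Fintype X] [Fintype Y] [Fintype Z] [Fintype S]
    [Nonempty S] [Nonempty Z]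
    (f : S → X → Z) (Pt : X × Y → ℝ) (PY : Y → ℝ) (k : ℝ)
    (huniv : ∀ x x', x ≠ x' →
      (∑ s, if f s x = f s x' then (1:ℝ) else 0) / (Fintype.card S : ℝ)
        ≤ 1 / (Fintype.card Z : ℝ))
    (hPt : ∀ p, 0 ≤ Pt p) (hPt1 : ∑ p, Pt p ≤ 1)
    (hPY : ∀ y, 0 ≤ PY y) (hPY1 : ∑ y, PY y = 1)
    (hmarg : ∀ y, ∑ x, Pt (x, y) ≤ PY y)
    (hbound : ∀ p : X × Y, Pt p ≤ (2:ℝ) ^ (-k) * PY p.2) :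
    Tv (fun q : S × Z × Y =>
          (1 / (Fintype.card S : ℝ)) * ∑ x, if f q.1 x = q.2.1 then Pt (x, q.2.2) else 0)
       (fun q : S × Z × Y =>
          (1 / (Fintype.card S : ℝ)) * (1 / (Fintype.card Z : ℝ)) * (∑ x, Pt (x, q.2.2)))
      ≤ (1/2) * Real.sqrt ((Fintype.card Z : ℝ) * (2:ℝ) ^ (-k)) :=
  stmt18_general f Pt PY k huniv hPt hPt1 hPY hPY1 hbound
end
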